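/- arXiv:1807.00562 — 8 statements merged into one kernel-verified Lean document; each statement's English description precedes it below -/
import Mathlib

section
/- For all natural numbers l with 0 < l and all ordinals ξ ≤ χ, the relation E_{l+1}^χ is contained in E_l^ξ: for all finite sets a and b of ordinals all of whose elements are ≥ χ, if E_{l+1}^χ(a,b) holds, then E_l^ξ(a,b) holds. -/
/-- The increasing enumeration of a finite set of ordinals, with the ordinal `ξ`
prepended at index `0` (so index `i + 1` gives the `i`-th element of `a` in
increasing order). -/
noncomputable def finsetEnum (ξ : Ordinal) (a : Finset Ordinal) : ℕ → Ordinal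
  | 0 => ξ
  | (i + 1) => (a.sort (· ≤ ·)).getD i 0

/-- The relation `E_l^ξ` on finite sets of ordinals. -/
def ERel (l : ℕ) (ξ : Ordinal) (a b : Finset Ordinal) : Prop :=
  a.card = b.card ∧
    ∀ i < a.card, ∃ μ ν ρ : Ordinal,
      finsetEnum ξ a (i + 1) = finsetEnum ξ a i + Ordinal.omega0 ^ (l : Ordinal) * μ + ρ ∧
      finsetEnum ξ b (i + 1) = finsetEnum ξ b i + Ordinal.omega0 ^ (l : Ordinal) * ν + ρ ∧
      ρ < Ordinal.omega0 ^ (l : Ordinal) ∧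
      (min μ ν = 0 → μ = 0 ∧ ν = 0)

/-!
Each step of `E_l^ξ` is a step of `E_{l+1}` whose two starting points are shifted by the same
`δ` (`χ - ξ` for the first step, `0` afterwards). Dividing by `ω^l`, the shift and the common
remainder `ρ < ω^{l+1}` contribute only a common remainder `< ω^l`, while a nonzero multiple of
`ω^{l+1} = ω^l · ω` absorbs the part of `δ` below `ω^l`; so the new multipliers are again both
zero or both nonzero.
-/

open Ordinal

def ERelStep (l : ℕ) (α β α' β' : Ordinal) : Prop :=
  ∃ μ ν ρ : Ordinal,
    α' = α + ω ^ (l : Ordinal) * μ + ρ ∧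
    β' = β + ω ^ (l : Ordinal) * ν + ρ ∧
    ρ < ω ^ (l : Ordinal) ∧
    (min μ ν = 0 → μ = 0 ∧ ν = 0)

theorem eRel_iff (l : ℕ) (ξ : Ordinal) (a b : Finset Ordinal) :
    ERel l ξ a b ↔ a.card = b.card ∧ ∀ i < a.card,
      ERelStep l (finsetEnum ξ a i) (finsetEnum ξ b i)
        (finsetEnum ξ a (i + 1)) (finsetEnum ξ b (i + 1)) :=
  Iff.rfl

theorem opow_natCast_succ (l : ℕ) : ω ^ ((l + 1 : ℕ) : Ordinal) = ω ^ (l : Ordinal) * ω := by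
  rw [Nat.cast_succ, opow_add, opow_one]

theorem add_opow_succ_mul_add (l : ℕ) (δ μ ρ : Ordinal) (hμ : μ ≠ 0) :
    δ + ω ^ ((l + 1 : ℕ) : Ordinal) * μ + ρ =
      ω ^ (l : Ordinal) * (δ / ω ^ (l : Ordinal) + ω * μ + ρ / ω ^ (l : Ordinal)) +
        ρ % ω ^ (l : Ordinal) := by
  set e : Ordinal := ω ^ (l : Ordinal)
  have he : e ≠ 0 := (opow_pos _ omega0_pos).ne'
  have habsorb : δ % e + e * ω * μ = e * ω * μ :=
    add_of_omega0_opow_le (mod_lt δ he)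
      ((le_mul_left e omega0_pos).trans (le_mul_left _ (pos_iff_ne_zero.2 hμ)))
  calc δ + ω ^ ((l + 1 : ℕ) : Ordinal) * μ + ρ
      = e * (δ / e) + (δ % e + e * ω * μ) + (e * (ρ / e) + ρ % e) := by
        rw [opow_natCast_succ, ← add_assoc (e * (δ / e)), div_add_mod, div_add_mod]
    _ = e * (δ / e + ω * μ + ρ / e) + ρ % e := by
        rw [habsorb, mul_add, mul_add, mul_assoc]
        simp only [add_assoc]

theorem ERelStep.of_succ_add {l : ℕ} {α β δ α' β' : Ordinal}
    (h : ERelStep (l + 1) (α + δ) (β + δ) α' β') : ERelStep l α β α' β' := by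
  obtain ⟨μ, ν, ρ, rfl, rfl, -, hmin⟩ := h
  set e : Ordinal := ω ^ (l : Ordinal)
  have he : e ≠ 0 := (opow_pos _ omega0_pos).ne'
  rcases eq_or_ne μ 0 with hμ | hμ
  · obtain ⟨rfl, rfl⟩ := hmin (by simp [hμ])
    refine ⟨(δ + ρ) / e, (δ + ρ) / e, (δ + ρ) % e, ?_, ?_, mod_lt _ he,
      fun h => by rw [min_self] at h; exact ⟨h, h⟩⟩ <;>
      rw [mul_zero, add_zero, add_assoc, add_assoc, div_add_mod]
  · have hν : ν ≠ 0 := fun hν => hμ (hmin (by simp [hν])).1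
    have hpos : ∀ {κ : Ordinal}, κ ≠ 0 → δ / e + ω * κ + ρ / e ≠ 0 := fun hκ h0 => by
      simp only [Ordinal.add_eq_zero_iff] at h0
      exact mul_ne_zero omega0_ne_zero hκ h0.1.2
    refine ⟨δ / e + ω * μ + ρ / e, δ / e + ω * ν + ρ / e, ρ % e, ?_, ?_, mod_lt _ he,
      fun h => ?_⟩
    · rw [add_assoc α, add_assoc α, add_opow_succ_mul_add l δ μ ρ hμ, ← add_assoc]
    · rw [add_assoc β, add_assoc β, add_opow_succ_mul_add l δ ν ρ hν, ← add_assoc]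
    · rcases min_eq_iff.1 h with ⟨h0, -⟩ | ⟨h0, -⟩
      · exact absurd h0 (hpos hμ)
      · exact absurd h0 (hpos hν)

theorem finsetEnum_eq_add_of_le {ξ χ : Ordinal} (hξχ : ξ ≤ χ) (a b : Finset Ordinal) (i : ℕ) :
    ∃ δ, finsetEnum χ a i = finsetEnum ξ a i + δ ∧ finsetEnum χ b i = finsetEnum ξ b i + δ := by
  cases i with
  | zero =>
    exact ⟨χ - ξ, (Ordinal.add_sub_cancel_of_le hξχ).symm, (Ordinal.add_sub_cancel_of_le hξχ).symm⟩
  | succ j => exact ⟨0, (add_zero _).symm, (add_zero _).symm⟩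

theorem stmt0_general (l : ℕ) (ξ χ : Ordinal) (hξχ : ξ ≤ χ)
    (a b : Finset Ordinal)
    (h : ERel (l + 1) χ a b) : ERel l ξ a b := by
  rw [eRel_iff] at h ⊢
  refine ⟨h.1, fun i hi => ?_⟩
  obtain ⟨δ, hδa, hδb⟩ := finsetEnum_eq_add_of_le hξχ a b i
  have hstep := h.2 i hi
  rw [hδa, hδb] at hstep
  exact hstep.of_succ_add

/-- For all natural numbers `l` with `0 < l` and all ordinals
`ξ ≤ χ`, the relation `E_{l+1}^χ` is contained in `E_l^ξ`: for all finite sets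
`a` and `b` of ordinals all of whose elements are `≥ χ`, if `E_{l+1}^χ(a,b)`
holds, then `E_l^ξ(a,b)` holds. -/
theorem stmt0 (l : ℕ) (hl : 0 < l) (ξ χ : Ordinal) (hξχ : ξ ≤ χ)
    (a b : Finset Ordinal) (ha : ∀ γ ∈ a, χ ≤ γ) (hb : ∀ γ ∈ b, χ ≤ γ)
    (h : ERel (l + 1) χ a b) : ERel l ξ a b :=
  stmt0_general l ξ χ hξχ a b h
end

section
/- If k and l are natural numbers with 0 < k and 0 < l, ξ is an ordinal, a is a (k+1)-element set of ordinals ≥ ξ, b is a k-element set of ordinals ≥ ξ, and α ∈ a is such that E_{l+1}^ξ(a \ {α}, b) holds, then there exists an ordinal β with ξ ≤ β and β ∉ b such that E_l^ξ(a, b ∪ {β}) holds. -/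
open Ordinal

/-- One clause of `ERel`, for the steps `A → A'` and `B → B'`, with the side condition
`min μ ν = 0 → μ = 0 ∧ ν = 0` in the equivalent form `μ = 0 ↔ ν = 0`. -/
def StepRel (c A A' B B' : Ordinal) : Prop :=
  ∃ μ ν ρ : Ordinal, A' = A + ω ^ c * μ + ρ ∧ B' = B + ω ^ c * ν + ρ ∧ ρ < ω ^ c ∧
    (μ = 0 ↔ ν = 0)

theorem min_eq_zero_imp_iff (μ ν : Ordinal) :
    (min μ ν = 0 → μ = 0 ∧ ν = 0) ↔ (μ = 0 ↔ ν = 0) := by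
  rw [min_eq_zero]; tauto

theorem eRel_iff_stepRel {l : ℕ} {ξ : Ordinal} {a b : Finset Ordinal} :
    ERel l ξ a b ↔ a.card = b.card ∧ ∀ i < a.card, StepRel l
      (finsetEnum ξ a i) (finsetEnum ξ a (i + 1)) (finsetEnum ξ b i) (finsetEnum ξ b (i + 1)) := by
  simp only [ERel, StepRel, min_eq_zero_imp_iff]

namespace StepRel

variable {c d A A' B B' : Ordinal}

theorem le_left (h : StepRel c A A' B B') : A ≤ A' := by
  obtain ⟨μ, ν, ρ, rfl, -⟩ := h
  rw [add_assoc]; exact le_self_add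

theorem le_right (h : StepRel c A A' B B') : B ≤ B' := by
  obtain ⟨μ, ν, ρ, -, rfl, -⟩ := h
  rw [add_assoc]; exact le_self_add

theorem eq_iff (h : StepRel c A A' B B') : A' = A ↔ B' = B := by
  obtain ⟨μ, ν, ρ, rfl, rfl, -, hμν⟩ := h
  have hw : ω ^ c ≠ 0 := opow_ne_zero c omega0_ne_zero
  simp only [add_assoc, add_eq_left, add_eq_zero_iff, mul_eq_zero, hw, false_or, hμν]

theorem lt_iff (h : StepRel c A A' B B') : A < A' ↔ B < B' := by
  rw [h.le_left.lt_iff_ne, h.le_right.lt_iff_ne, ne_comm, ne_comm (a := B), ne_eq, ne_eq,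
    h.eq_iff]

theorem mono (hcd : c ≤ d) (h : StepRel d A A' B B') : StepRel c A A' B B' := by
  obtain ⟨μ, ν, ρ, rfl, rfl, -, hμν⟩ := h
  obtain ⟨e, rfl⟩ := exists_add_of_le hcd
  have hw : ω ^ c ≠ 0 := opow_ne_zero c omega0_ne_zero
  have he : ω ^ e ≠ 0 := opow_ne_zero e omega0_ne_zero
  have key (X κ : Ordinal) : X + ω ^ (c + e) * κ + ρ =
      X + ω ^ c * (ω ^ e * κ + ρ / ω ^ c) + ρ % ω ^ c := by
    conv_lhs => rw [← div_add_mod ρ (ω ^ c)]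
    rw [mul_add, ← mul_assoc, ← opow_add]
    simp only [add_assoc]
  refine ⟨_, _, _, key A μ, key B ν, mod_lt ρ hw, ?_⟩
  simp only [add_eq_zero_iff, mul_eq_zero, he, false_or, hμν]

end StepRel

theorem stepRel_add_add (c A B δ : Ordinal) : StepRel c A (A + δ) B (B + δ) := by
  refine ⟨δ / ω ^ c, δ / ω ^ c, δ % ω ^ c, ?_, ?_, mod_lt δ (opow_ne_zero c omega0_ne_zero),
    Iff.rfl⟩ <;> rw [add_assoc, div_add_mod]

theorem add_opow_mul_sub_div {σ d μ : Ordinal} (hσ : σ < ω ^ d * μ) :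
    σ + ω ^ d * (μ - σ / ω ^ d) = ω ^ d * μ := by
  have hw : ω ^ d ≠ 0 := opow_ne_zero d omega0_ne_zero
  have hκ : σ / ω ^ d < μ := (lt_mul_iff_div_lt hw).mp hσ
  have hμ' : 0 < μ - σ / ω ^ d := by simpa [Ordinal.sub_eq_zero_iff_le, pos_iff_ne_zero] using hκ
  calc σ + ω ^ d * (μ - σ / ω ^ d)
      = ω ^ d * (σ / ω ^ d) + (σ % ω ^ d + ω ^ d * (μ - σ / ω ^ d)) := by
        rw [← add_assoc, div_add_mod]
    _ = ω ^ d * (σ / ω ^ d) + ω ^ d * (μ - σ / ω ^ d) := by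
        rw [add_of_omega0_opow_le (mod_lt σ hw) (le_mul_left _ hμ')]
    _ = ω ^ d * μ := by rw [← mul_add, Ordinal.add_sub_cancel_of_le hκ.le]

theorem StepRel.exists_split {c d A A' B B' α : Ordinal} (hcd : c < d)
    (h : StepRel d A A' B B') (hAα : A ≤ α) (hαA' : α ≤ A') :
    ∃ β, StepRel c A α B β ∧ StepRel c α A' β B' := by
  obtain ⟨μ, ν, ρ, rfl, rfl, hρ, hμν⟩ := h
  obtain ⟨σ, rfl⟩ := exists_add_of_le hAα
  have hσ : σ ≤ ω ^ d * μ + ρ := by rwa [add_assoc, add_le_add_iff_left] at hαA'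
  have hw : ω ^ c ≠ 0 := opow_ne_zero c omega0_ne_zero
  have hwW : ω ^ c < ω ^ d := (opow_lt_opow_iff_right one_lt_omega0).mpr hcd
  rcases le_or_gt (ω ^ d * μ) σ with hle | hlt
  · obtain ⟨σ', rfl⟩ := exists_add_of_le hle
    obtain ⟨τ, rfl⟩ := exists_add_of_le (le_of_add_le_add_left hσ)
    refine ⟨B + ω ^ d * ν + σ', StepRel.mono hcd.le
      ⟨μ, ν, σ', (add_assoc _ _ _).symm, rfl, lt_of_le_of_lt le_self_add hρ, hμν⟩, ?_⟩
    simpa only [add_assoc] using stepRel_add_add c (A + (ω ^ d * μ + σ')) (B + ω ^ d * ν + σ') τ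
  · have hμ : μ ≠ 0 := by rintro rfl; simp at hlt
    have hν : 0 < ν := pos_iff_ne_zero.mpr (mt hμν.mpr hμ)
    obtain ⟨ν₁, hν₁, hν₁0⟩ : ∃ ν₁ : Ordinal, ν₁ ≤ 1 ∧ (σ / ω ^ c = 0 ↔ ν₁ = 0) :=
      ⟨if σ / ω ^ c = 0 then 0 else 1, by split_ifs <;> simp, by split_ifs <;> simp_all⟩
    have hsmall : ω ^ c * ν₁ + σ % ω ^ c < ω ^ d :=
      isPrincipal_add_omega0_opow d (lt_of_le_of_lt (mul_le_of_le_one_right' hν₁) hwW)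
        ((mod_lt σ hw).trans hwW)
    refine ⟨B + (ω ^ c * ν₁ + σ % ω ^ c), ⟨σ / ω ^ c, ν₁, σ % ω ^ c,
      by rw [add_assoc, div_add_mod], by rw [add_assoc], mod_lt σ hw, hν₁0⟩,
      StepRel.mono hcd.le ⟨μ - σ / ω ^ d, ν, ρ, ?_, ?_, hρ, ?_⟩⟩
    · rw [add_assoc A σ, add_opow_mul_sub_div hlt]
    · rw [add_assoc B (ω ^ c * ν₁ + σ % ω ^ c), add_of_omega0_opow_le hsmall (le_mul_left _ hν)]
    · simp [hν.ne', Ordinal.sub_eq_zero_iff_le,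
        (lt_mul_iff_div_lt (opow_ne_zero d omega0_ne_zero)).mp hlt]

section Enumeration

variable {ξ x : Ordinal} {s : Finset Ordinal} {i j : ℕ}

theorem finsetEnum_succ (h : i < s.card) :
    finsetEnum ξ s (i + 1) = (s.sort (· ≤ ·))[i]'(by rwa [Finset.length_sort]) :=
  List.getD_eq_getElem _ _ _

theorem finsetEnum_mem (h : i < s.card) : finsetEnum ξ s (i + 1) ∈ s := by
  rw [finsetEnum_succ h]
  exact (Finset.mem_sort _).mp (List.getElem_mem _)

theorem finsetEnum_lt_finsetEnum (hij : i < j) (hj : j < s.card) :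
    finsetEnum ξ s (i + 1) < finsetEnum ξ s (j + 1) := by
  rw [finsetEnum_succ (hij.trans hj), finsetEnum_succ hj]
  exact (Finset.sortedLT_sort s).getElem_lt_getElem_iff.mpr hij

theorem finsetEnum_le_finsetEnum (hij : i ≤ j) (hj : j < s.card) :
    finsetEnum ξ s (i + 1) ≤ finsetEnum ξ s (j + 1) := by
  rcases hij.lt_or_eq with hij | rfl
  · exact (finsetEnum_lt_finsetEnum hij hj).le
  · rfl

theorem exists_finsetEnum_eq (hx : x ∈ s) : ∃ i < s.card, finsetEnum ξ s (i + 1) = x := by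
  obtain ⟨i, hi, rfl⟩ := List.mem_iff_getElem.mp ((Finset.mem_sort (· ≤ ·)).mpr hx)
  rw [Finset.length_sort] at hi
  exact ⟨i, hi, finsetEnum_succ hi⟩

theorem le_finsetEnum (hs : ∀ γ ∈ s, ξ ≤ γ) (hi : i ≤ s.card) : ξ ≤ finsetEnum ξ s i := by
  cases i with
  | zero => exact le_rfl
  | succ i => exact hs _ (finsetEnum_mem hi)

def FitsAt (ξ : Ordinal) (s : Finset Ordinal) (j : ℕ) (x : Ordinal) : Prop :=
  j ≤ s.card ∧ (0 < j → finsetEnum ξ s j < x) ∧ (j < s.card → x < finsetEnum ξ s (j + 1))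

theorem exists_fitsAt (hx : x ∉ s) : ∃ j, FitsAt ξ s j x := by
  classical
  have hex : ∃ j, j < s.card → x < finsetEnum ξ s (j + 1) :=
    ⟨s.card, fun h => (lt_irrefl _ h).elim⟩
  refine ⟨Nat.find hex, Nat.find_min' hex fun h => (lt_irrefl _ h).elim, fun hpos => ?_,
    Nat.find_spec hex⟩
  obtain ⟨m, hm⟩ := Nat.exists_eq_add_one_of_ne_zero hpos.ne'
  have hmin := Nat.find_min hex (hm ▸ Nat.lt_succ_self m : m < Nat.find hex)
  push Not at hmin
  rw [hm]
  exact hmin.2.lt_of_ne fun h => hx (h ▸ finsetEnum_mem hmin.1)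

namespace FitsAt

theorem finsetEnum_lt (hx : FitsAt ξ s j x) (hi : i < j) : finsetEnum ξ s (i + 1) < x := by
  obtain ⟨m, rfl⟩ := Nat.exists_eq_add_one_of_ne_zero (by omega : j ≠ 0)
  exact (finsetEnum_le_finsetEnum (by omega) (by have := hx.1; omega)).trans_lt
    (hx.2.1 m.succ_pos)

theorem lt_finsetEnum (hx : FitsAt ξ s j x) (hi : j ≤ i) (hs : i < s.card) :
    x < finsetEnum ξ s (i + 1) :=
  (hx.2.2 (by omega)).trans_le (finsetEnum_le_finsetEnum hi hs)

theorem not_mem (hx : FitsAt ξ s j x) : x ∉ s := fun hxs => by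
  obtain ⟨i, hi, rfl⟩ := exists_finsetEnum_eq (ξ := ξ) hxs
  rcases lt_or_ge i j with hij | hij
  · exact lt_irrefl _ (hx.finsetEnum_lt hij)
  · exact lt_irrefl _ (hx.lt_finsetEnum hij hi)

theorem sort_insert (hx : FitsAt ξ s j x) :
    (insert x s).sort (· ≤ ·) = (s.sort (· ≤ ·)).insertIdx j x := by
  set L := s.sort (· ≤ ·)
  have hlen : L.length = s.card := Finset.length_sort _
  have hjL : j ≤ L.length := hlen ▸ hx.1
  have hL (k : ℕ) (hk : k < L.length) : L[k] = finsetEnum ξ s (k + 1) :=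
    (finsetEnum_succ (hlen ▸ hk)).symm
  refine (Finset.sortedLT_sort _).eq_of_mem_iff ?_ fun y => ?_
  · rw [List.sortedLT_iff_pairwise, List.pairwise_iff_getElem]
    intro m m' hm hm' hmm'
    rw [List.length_insertIdx_of_le_length hjL] at hm hm'
    simp only [List.getElem_insertIdx]
    split_ifs <;> first
      | omega
      | (rw [hL, hL]; apply finsetEnum_lt_finsetEnum <;> omega)
      | (rw [hL]; apply hx.finsetEnum_lt; omega)
      | (rw [hL]; apply hx.lt_finsetEnum <;> omega)
  · rw [Finset.mem_sort, Finset.mem_insert, List.mem_insertIdx hjL, Finset.mem_sort]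

theorem finsetEnum_insert_of_le (hx : FitsAt ξ s j x) (hi : i ≤ j) :
    finsetEnum ξ (insert x s) i = finsetEnum ξ s i := by
  cases i with
  | zero => rfl
  | succ i =>
    simp only [finsetEnum, List.getD_eq_getElem?_getD, hx.sort_insert,
      List.getElem?_insertIdx_of_lt (by omega : i < j)]

theorem finsetEnum_insert_self (hx : FitsAt ξ s j x) :
    finsetEnum ξ (insert x s) (j + 1) = x := by
  simp [finsetEnum, List.getD_eq_getElem?_getD, hx.sort_insert, List.getElem?_insertIdx_self, hx.1]

theorem finsetEnum_insert_of_lt (hx : FitsAt ξ s j x) (hi : j < i) :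
    finsetEnum ξ (insert x s) (i + 1) = finsetEnum ξ s i := by
  obtain ⟨i, rfl⟩ := Nat.exists_eq_add_one_of_ne_zero (by omega : i ≠ 0)
  simp only [finsetEnum, List.getD_eq_getElem?_getD, hx.sort_insert,
    List.getElem?_insertIdx_of_gt (by omega : j < i + 1), Nat.add_sub_cancel]

end FitsAt

end Enumeration

theorem eRel_insert_insert {l : ℕ} {ξ x y : Ordinal} {s t : Finset Ordinal} {j : ℕ}
    (hx : FitsAt ξ s j x) (hy : FitsAt ξ t j y) (hcard : s.card = t.card)
    (hother : ∀ i < s.card, i ≠ j → StepRel l (finsetEnum ξ s i) (finsetEnum ξ s (i + 1))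
      (finsetEnum ξ t i) (finsetEnum ξ t (i + 1)))
    (hleft : StepRel l (finsetEnum ξ s j) x (finsetEnum ξ t j) y)
    (hright : j < s.card →
      StepRel l x (finsetEnum ξ s (j + 1)) y (finsetEnum ξ t (j + 1))) :
    ERel l ξ (insert x s) (insert y t) := by
  rw [eRel_iff_stepRel, Finset.card_insert_of_notMem hx.not_mem,
    Finset.card_insert_of_notMem hy.not_mem, hcard]
  refine ⟨rfl, fun i hi => ?_⟩
  have hjs := hx.1
  rcases lt_trichotomy i j with hij | rfl | hji
  · rw [hx.finsetEnum_insert_of_le hij.le, hx.finsetEnum_insert_of_le hij,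
      hy.finsetEnum_insert_of_le hij.le, hy.finsetEnum_insert_of_le hij]
    exact hother i (by omega) hij.ne
  · rw [hx.finsetEnum_insert_of_le le_rfl, hx.finsetEnum_insert_self,
      hy.finsetEnum_insert_of_le le_rfl, hy.finsetEnum_insert_self]
    exact hleft
  · obtain ⟨m, rfl⟩ := Nat.exists_eq_add_one_of_ne_zero (by omega : i ≠ 0)
    rw [hx.finsetEnum_insert_of_lt hji, hy.finsetEnum_insert_of_lt hji]
    rcases (Nat.lt_succ_iff.mp hji).eq_or_lt with rfl | hjm
    · rw [hx.finsetEnum_insert_self, hy.finsetEnum_insert_self]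
      exact hright (by omega)
    · rw [hx.finsetEnum_insert_of_lt hjm, hy.finsetEnum_insert_of_lt hjm]
      exact hother m (by omega) hjm.ne'

theorem stmt1_general (l : ℕ) (ξ : Ordinal) (a b : Finset Ordinal)
    (ha : ∀ γ ∈ a, ξ ≤ γ) (hb : ∀ γ ∈ b, ξ ≤ γ)
    (α : Ordinal) (hα : α ∈ a)
    (h : ERel (l + 1) ξ (a.erase α) b) :
    ∃ β : Ordinal, ξ ≤ β ∧ β ∉ b ∧ ERel l ξ a (insert β b) := by
  set E := a.erase α
  rw [eRel_iff_stepRel] at h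
  obtain ⟨j, hαj⟩ := exists_fitsAt (ξ := ξ) (Finset.notMem_erase α a)
  have hEα : finsetEnum ξ E j ≤ α := by
    rcases Nat.eq_zero_or_pos j with rfl | hj
    · exact ha α hα
    · exact (hαj.2.1 hj).le
  have hlt : (l : Ordinal) < ((l + 1 : ℕ) : Ordinal) := by exact_mod_cast l.lt_succ_self
  obtain ⟨β, hleft, hright⟩ : ∃ β, StepRel l (finsetEnum ξ E j) α (finsetEnum ξ b j) β ∧
      (j < E.card → StepRel l α (finsetEnum ξ E (j + 1)) β (finsetEnum ξ b (j + 1))) := by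
    rcases hαj.1.lt_or_eq with hj | hj
    · obtain ⟨β, h₁, h₂⟩ := (h.2 j hj).exists_split hlt hEα (hαj.2.2 hj).le
      exact ⟨β, h₁, fun _ => h₂⟩
    · refine ⟨_, by simpa only [Ordinal.add_sub_cancel_of_le hEα] using
        stepRel_add_add l (finsetEnum ξ E j) (finsetEnum ξ b j) (α - finsetEnum ξ E j),
        fun hj' => (hj'.ne hj).elim⟩
  have hβj : FitsAt ξ b j β :=
    ⟨h.1 ▸ hαj.1, fun hj => hleft.lt_iff.mp (hαj.2.1 hj),
      fun hj => (hright (h.1 ▸ hj)).lt_iff.mp (hαj.2.2 (h.1 ▸ hj))⟩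
  refine ⟨β, (le_finsetEnum hb hβj.1).trans hleft.le_right, hβj.not_mem, ?_⟩
  rw [← Finset.insert_erase hα]
  exact eRel_insert_insert hαj hβj h.1 (fun i hi _ => (h.2 i hi).mono hlt.le) hleft hright

/-- If `0 < k`, `0 < l`, `ξ` is an ordinal, `a` is a
`(k+1)`-element set of ordinals `≥ ξ`, `b` is a `k`-element set of ordinals
`≥ ξ`, and `α ∈ a` is such that `E_{l+1}^ξ(a \ {α}, b)` holds, then there is an
ordinal `β` with `ξ ≤ β` and `β ∉ b` such that `E_l^ξ(a, b ∪ {β})` holds. -/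
theorem stmt1 (k l : ℕ) (hk : 0 < k) (hl : 0 < l) (ξ : Ordinal)
    (a b : Finset Ordinal) (hacard : a.card = k + 1) (hbcard : b.card = k)
    (ha : ∀ γ ∈ a, ξ ≤ γ) (hb : ∀ γ ∈ b, ξ ≤ γ)
    (α : Ordinal) (hα : α ∈ a)
    (h : ERel (l + 1) ξ (a.erase α) b) :
    ∃ β : Ordinal, ξ ≤ β ∧ β ∉ b ∧ ERel l ξ a (insert β b) :=
  stmt1_general l ξ a b ha hb α hα h
end

section
/- Let κ be an uncountable regular cardinal, let δ be an ordinal with δ < κ, and let ι : κ → (δ → 2) be an injection. Define the colouring c on 2-element subsets of κ by setting, for α < β < κ, c({α,β}) = 0 if ι(α)(Δ(ι(α),ι(β))) < ι(β)(Δ(ι(α),ι(β))), and c({α,β}) = 1 otherwise, where Δ(x,y) denotes the least γ < δ with x(γ) ≠ y(γ). Then no c-homogeneous subset of κ is unbounded in κ. -/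
/-!
Homogeneity in colour `0` (resp. `1`) makes `ι` strictly lexicographically increasing
(resp. decreasing, i.e. increasing after swapping the two bits) along `H`. So it suffices that no
`x : κ → 2^δ` is lex-increasing on an unbounded `S ⊆ κ`; this goes by induction on `δ`. For
`a ∈ S` let `a'` be its successor in `S` and `g a` the first place where `x a` and `x a'` differ.
By regularity of `κ` some fibre `g⁻¹{γ₀}` is unbounded, and on it all lex comparisons are decided
below `γ₀`: if `a < b` in the fibre had `x a`, `x b` agreeing up to `γ₀`, then `x b <lex x a'`
although `a' ≤ b`.
-/

/-- `Δ(x,y)`: the least `γ < δ` at which the functions `x, y : δ → 2`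
differ. -/
noncomputable def leastDiff (δ : Ordinal) (x y : Ordinal → Fin 2) : Ordinal :=
  sInf {γ : Ordinal | γ < δ ∧ x γ ≠ y γ}

open Set Order

def LexLT (δ : Ordinal) (a b : Ordinal → Fin 2) : Prop :=
  ∃ γ < δ, (∀ γ' < γ, a γ' = b γ') ∧ a γ < b γ

def LexStrictMonoOn (δ : Ordinal) (x : Ordinal → Ordinal → Fin 2) (S : Set Ordinal) : Prop :=
  ∀ a ∈ S, ∀ b ∈ S, a < b → LexLT δ (x a) (x b)

def UnboundedBelow (o : Ordinal) (S : Set Ordinal) : Prop :=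
  ∀ γ < o, ∃ α ∈ S, γ ≤ α

section Lex

variable {δ : Ordinal} {a b : Ordinal → Fin 2}

theorem LexLT.asymm (hab : LexLT δ a b) : ¬ LexLT δ b a := by
  rintro ⟨γ₂, -, heq₂, hlt₂⟩
  obtain ⟨γ₁, -, heq₁, hlt₁⟩ := hab
  rcases lt_trichotomy γ₁ γ₂ with h | rfl | h
  · exact (heq₂ _ h ▸ hlt₁).false
  · exact (hlt₁.trans hlt₂).false
  · exact (heq₁ _ h ▸ hlt₂).false

theorem LexLT.irrefl : ¬ LexLT δ a a := fun h => h.asymm h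

theorem LexLT.rev (hab : LexLT δ a b) : LexLT δ (Fin.rev ∘ b) (Fin.rev ∘ a) := by
  obtain ⟨γ, hγ, heq, hlt⟩ := hab
  exact ⟨γ, hγ, fun γ' hγ' => by simp [heq γ' hγ'], Fin.rev_lt_rev.2 hlt⟩

theorem leastDiff_spec (h : ∃ γ < δ, a γ ≠ b γ) :
    leastDiff δ a b < δ ∧ a (leastDiff δ a b) ≠ b (leastDiff δ a b) ∧
      ∀ γ < leastDiff δ a b, a γ = b γ := by
  obtain ⟨hlt, hne⟩ := csInf_mem (s := {γ | γ < δ ∧ a γ ≠ b γ}) h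
  refine ⟨hlt, hne, fun γ hγ => not_not.1 fun hγne => ?_⟩
  exact (csInf_le' (s := {γ | γ < δ ∧ a γ ≠ b γ}) ⟨hγ.trans hlt, hγne⟩).not_gt hγ

theorem lexLT_of_leastDiff_lt (h : ∃ γ < δ, a γ ≠ b γ)
    (hlt : a (leastDiff δ a b) < b (leastDiff δ a b)) : LexLT δ a b :=
  ⟨_, (leastDiff_spec h).1, (leastDiff_spec h).2.2, hlt⟩

theorem lexLT_of_not_leastDiff_lt (h : ∃ γ < δ, a γ ≠ b γ)
    (hlt : ¬ a (leastDiff δ a b) < b (leastDiff δ a b)) : LexLT δ b a := by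
  obtain ⟨hδ, hne, heq⟩ := leastDiff_spec h
  exact ⟨_, hδ, fun γ hγ => (heq γ hγ).symm, lt_of_le_of_ne (not_lt.1 hlt) hne.symm⟩

theorem LexLT.lexLT_of_not_lexLT {p q r : Ordinal → Fin 2} {γ₀ : Ordinal} (hpq : LexLT δ p q)
    (hγ₀ : γ₀ < δ) (hpr : ∀ γ < γ₀, p γ = r γ) (hp : p γ₀ = 0) (hq : q γ₀ = 0) (hr : r γ₀ = 1)
    (hqr : ¬ LexLT δ q r) : LexLT γ₀ p q := by
  obtain ⟨γ₁, -, heq, hlt⟩ := hpq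
  rcases lt_trichotomy γ₁ γ₀ with h | rfl | h
  · exact ⟨γ₁, h, heq, hlt⟩
  · simp [hq] at hlt
  · refine absurd ⟨γ₀, hγ₀, fun γ hγ => ?_, by simp [hq, hr]⟩ hqr
    rw [← heq γ (hγ.trans h), hpr γ hγ]

end Lex

section Unbounded

variable {S : Set Ordinal}

theorem UnboundedBelow.exists_min_gt {o : Ordinal} (hS : UnboundedBelow o S) (ho : IsSuccLimit o)
    {a : Ordinal} (ha : a < o) : ∃ a' ∈ S, a < a' ∧ ∀ b ∈ S, a < b → a' ≤ b := by
  obtain ⟨b, hbS, hb⟩ := hS _ (ho.succ_lt ha)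
  have hne : {b | b ∈ S ∧ a < b}.Nonempty := ⟨b, hbS, lt_of_lt_of_le (lt_succ a) hb⟩
  obtain ⟨ha'S, ha'⟩ := csInf_mem hne
  exact ⟨_, ha'S, ha', fun b hbS hab => csInf_le' ⟨hbS, hab⟩⟩

theorem UnboundedBelow.exists_unboundedBelow_fiber {κ : Cardinal} (hκ : κ.IsRegular)
    (hS : UnboundedBelow κ.ord S) {δ : Ordinal} (hδ : δ < κ.ord) {g : Ordinal → Ordinal}
    (hg : ∀ a ∈ S, g a < δ) : ∃ γ < δ, UnboundedBelow κ.ord {a | a ∈ S ∧ g a = γ} := by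
  by_contra! hbdd
  have hfiber_bdd : ∀ γ < δ, ∃ b < κ.ord, ∀ a ∈ S, g a = γ → a < b := by
    intro γ hγ
    simpa [UnboundedBelow] using hbdd γ hγ
  choose! bound hbound_lt hbound using hfiber_bdd
  have hB : ⨆ γ : Iio δ, bound γ < κ.ord := by
    refine Ordinal.lift_iSup_lt_of_lt_cof ?_ fun γ => hbound_lt γ γ.2
    simpa [Cardinal.mk_Iio_ordinal, ← Ordinal.lift_card, ← Cardinal.lift_ord, ← Ordinal.lift_cof,
      hκ.cof_ord] using Cardinal.lt_ord.1 hδ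
  obtain ⟨a, haS, ha⟩ := hS _ hB
  have hle : bound (g a) ≤ ⨆ γ : Iio δ, bound γ :=
    Ordinal.le_iSup (fun γ : Iio δ => bound γ) ⟨g a, hg a haS⟩
  exact (ha.trans_lt ((hbound (g a) (hg a haS) a haS rfl).trans_le hle)).false

end Unbounded

theorem LexStrictMonoOn.not_unboundedBelow {κ : Cardinal} (hκ : κ.IsRegular)
    (x : Ordinal → Ordinal → Fin 2) {δ : Ordinal} (hδ : δ < κ.ord) {S : Set Ordinal}
    (hSκ : S ⊆ Iio κ.ord) (hx : LexStrictMonoOn δ x S) : ¬ UnboundedBelow κ.ord S := by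
  induction δ using WellFoundedLT.induction generalizing S with
  | _ δ IH =>
    intro hS
    have hsucc : ∀ a ∈ S, ∃ γ < δ, ∃ a' ∈ S, (∀ b ∈ S, a < b → a' ≤ b) ∧
        (∀ γ' < γ, x a γ' = x a' γ') ∧ x a γ = 0 ∧ x a' γ = 1 := by
      intro a ha
      obtain ⟨a', ha'S, haa', hmin⟩ :=
        hS.exists_min_gt (Cardinal.isSuccLimit_ord hκ.aleph0_le) (hSκ ha)
      obtain ⟨γ, hγ, heq, hlt⟩ := hx a ha a' ha'S haa'
      exact ⟨γ, hγ, a', ha'S, hmin, heq, by omega, by omega⟩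
    choose! g hgδ next hnextS hnext_le hagree hx0 hx1 using hsucc
    obtain ⟨γ₀, hγ₀, hfib⟩ := hS.exists_unboundedBelow_fiber hκ hδ hgδ
    refine IH γ₀ hγ₀ (hγ₀.trans hδ) (fun a ha => hSκ ha.1) ?_ hfib
    rintro a ⟨ha, rfl⟩ b ⟨hb, hgb⟩ hab
    refine (hx a ha b hb hab).lexLT_of_not_lexLT (hgδ a ha) (hagree a ha) (hx0 a ha)
      (hgb ▸ hx0 b hb) (hx1 a ha) ?_
    rcases (hnext_le a ha b hb hab).lt_or_eq with h | h
    · exact (hx _ (hnextS a ha) b hb h).asymm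
    · exact h ▸ LexLT.irrefl

theorem stmt3_general (κ : Cardinal) (hreg : κ.IsRegular)
    (δ : Ordinal) (hδ : δ < κ.ord)
    (ι : Ordinal → Ordinal → Fin 2)
    (hinj : ∀ α < κ.ord, ∀ β < κ.ord, α ≠ β → ∃ γ < δ, ι α γ ≠ ι β γ)
    (c : Finset Ordinal → Fin 2)
    (hc : ∀ α β : Ordinal, α < β → β < κ.ord →
      c {α, β} = if ι α (leastDiff δ (ι α) (ι β)) < ι β (leastDiff δ (ι α) (ι β))
        then 0 else 1)
    (H : Set Ordinal) (hH : H ⊆ Set.Iio κ.ord)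
    (hhom : ∃ i : Fin 2, ∀ α ∈ H, ∀ β ∈ H, α < β → c {α, β} = i) :
    ¬ (∀ γ < κ.ord, ∃ α ∈ H, γ ≤ α) := by
  obtain ⟨i, hi⟩ := hhom
  have hcol : ∀ α ∈ H, ∀ β ∈ H, α < β →
      (if ι α (leastDiff δ (ι α) (ι β)) < ι β (leastDiff δ (ι α) (ι β)) then 0 else 1) = i :=
    fun α hα β hβ hαβ => (hc α β hαβ (hH hβ)).symm.trans (hi α hα β hβ hαβ)
  have hdiff : ∀ α ∈ H, ∀ β ∈ H, α < β → ∃ γ < δ, ι α γ ≠ ι β γ :=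
    fun α hα β hβ hαβ => hinj α (hH hα) β (hH hβ) hαβ.ne
  fin_cases i
  · refine LexStrictMonoOn.not_unboundedBelow hreg ι hδ hH fun α hα β hβ hαβ => ?_
    exact lexLT_of_leastDiff_lt (hdiff α hα β hβ hαβ) (by simpa using hcol α hα β hβ hαβ)
  · refine LexStrictMonoOn.not_unboundedBelow hreg (fun α => Fin.rev ∘ ι α) hδ hH
      fun α hα β hβ hαβ => LexLT.rev ?_
    exact lexLT_of_not_leastDiff_lt (hdiff α hα β hβ hαβ) (by simpa using hcol α hα β hβ hαβ)

/-- Let `κ` be an uncountable regular cardinal, let `δ < κ` be an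
ordinal, and let `ι : κ → (δ → 2)` be an injection.  Define the colouring `c`
on `2`-element subsets of `κ` by `c({α,β}) = 0` if
`ι(α)(Δ(ι(α),ι(β))) < ι(β)(Δ(ι(α),ι(β)))` and `c({α,β}) = 1` otherwise, for
`α < β < κ`.  Then no `c`-homogeneous subset of `κ` is unbounded in `κ`.

Here ordinals below `κ.ord` represent elements of `κ`, functions `δ → 2` are
represented by functions `Ordinal → Fin 2` (only values below `δ` matter, and
injectivity is injectivity of the restrictions to `δ`). -/
theorem stmt3 (κ : Cardinal) (hreg : κ.IsRegular) (hunc : Cardinal.aleph0 < κ)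
    (δ : Ordinal) (hδ : δ < κ.ord)
    (ι : Ordinal → Ordinal → Fin 2)
    (hinj : ∀ α < κ.ord, ∀ β < κ.ord, α ≠ β → ∃ γ < δ, ι α γ ≠ ι β γ)
    (c : Finset Ordinal → Fin 2)
    (hc : ∀ α β : Ordinal, α < β → β < κ.ord →
      c {α, β} = if ι α (leastDiff δ (ι α) (ι β)) < ι β (leastDiff δ (ι α) (ι β))
        then 0 else 1)
    (H : Set Ordinal) (hH : H ⊆ Set.Iio κ.ord)
    (hhom : ∃ i : Fin 2, ∀ α ∈ H, ∀ β ∈ H, α < β → c {α, β} = i) :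
    ¬ (∀ γ < κ.ord, ∃ α ∈ H, γ ≤ α) :=
  stmt3_general κ hreg δ hδ ι hinj c hc H hH hhom
end

section
/- Let κ be an uncountable regular cardinal and let ι be an injection from κ into the binary sequences of length < κ. Suppose H ⊆ κ has cardinality κ, the map ι is <_lex-monotone on H (i.e., either ι(α) <_lex ι(β) for all α < β in H, or ι(β) <_lex ι(α) for all α < β in H), and for every ordinal γ < κ there exists a binary sequence t of length γ such that the set {α ∈ H : t ⊆ ι(α)} has cardinality κ. Then there exists x : κ → 2 such that the set {γ < κ : there is β < κ with x↾γ ⊆ ι(β)} is unbounded in κ. -/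
/-- A binary sequence, coded as a pair consisting of its length and its values
(values at or beyond the length are irrelevant junk, normalized to `0` by
`IsBSeq`). -/
abbrev BSeq : Type _ := Ordinal × (Ordinal → Fin 2)

/-- The length of a binary sequence. -/
def bLen (t : BSeq) : Ordinal := t.1

/-- The values of a binary sequence. -/
def bVal (t : BSeq) : Ordinal → Fin 2 := t.2

/-- A pair codes a genuine binary sequence: all values at or beyond the length
are `0`. -/
def IsBSeq (t : BSeq) : Prop := ∀ β, bLen t ≤ β → bVal t β = 0

/-- `BExt t u` means `t ⊆ u`: the binary sequence `u` extends `t`. -/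
def BExt (t u : BSeq) : Prop := bLen t ≤ bLen u ∧ ∀ β < bLen t, bVal u β = bVal t β

/-- `BExtFun t x` means `t ⊆ x`: the total function `x` extends the binary
sequence `t`. -/
def BExtFun (t : BSeq) (x : Ordinal → Fin 2) : Prop := ∀ β < bLen t, x β = bVal t β

/-- `x↾γ`: the restriction of `x : κ → 2` to `γ`, as a binary sequence of
length `γ`. -/
noncomputable def bRestrict (x : Ordinal → Fin 2) (γ : Ordinal) : BSeq :=
  (γ, fun β => if β < γ then x β else 0)

/-- The lexicographic ordering on binary sequences. -/
def BLex (s t : BSeq) : Prop :=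
  (BExt s t ∧ s ≠ t) ∨
    ∃ γ, γ < bLen s ∧ γ < bLen t ∧ (∀ β < γ, bVal s β = bVal t β) ∧ bVal s γ < bVal t γ

universe u

/-! If two sequences `s, s'` of the same length both have `κ` many extenders among `ι[H]` and
first differ at `β` with `s β < s' β`, then by `<_lex`-monotonicity all `H`-extenders of `s` lie
on one side of any fixed `H`-extender of `s'`; a set of ordinals bounded below `κ` has fewer
than `κ` elements, so this is impossible. Hence for each `γ < κ` the sequence `t_γ` of length `γ`
with `κ` many extenders is unique, the `t_γ` are coherent, and `x` is their union: `x↾γ = t_γ`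
is extended by some `ι(α)`. -/

open Cardinal Set

lemma bVal_bRestrict_of_lt {x : Ordinal → Fin 2} {γ β : Ordinal} (hβ : β < γ) :
    bVal (bRestrict x γ) β = x β := if_pos hβ

lemma isBSeq_bRestrict (x : Ordinal → Fin 2) (γ : Ordinal) : IsBSeq (bRestrict x γ) :=
  fun _ hβ => if_neg (not_lt.2 hβ)

lemma bExt_bRestrict {x : Ordinal → Fin 2} {γ : Ordinal} {u : BSeq} (hγ : γ ≤ bLen u)
    (hx : ∀ β < γ, bVal u β = x β) : BExt (bRestrict x γ) u :=
  ⟨hγ, fun β hβ => (hx β hβ).trans (bVal_bRestrict_of_lt hβ).symm⟩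

def LexSplit (s t : BSeq) (γ : Ordinal) : Prop :=
  γ < bLen s ∧ γ < bLen t ∧ (∀ β < γ, bVal s β = bVal t β) ∧ bVal s γ < bVal t γ

lemma LexSplit.of_bExt {s t s' t' : BSeq} {γ : Ordinal} (h : LexSplit s t γ) (hs : BExt s s')
    (ht : BExt t t') : LexSplit s' t' γ := by
  obtain ⟨hγs, hγt, hagree, hlt⟩ := h
  refine ⟨hγs.trans_le hs.1, hγt.trans_le ht.1, fun β hβ => ?_, ?_⟩
  · rw [hs.2 β (hβ.trans hγs), ht.2 β (hβ.trans hγt), hagree β hβ]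
  · rwa [hs.2 γ hγs, ht.2 γ hγt]

lemma LexSplit.ne {s t : BSeq} {γ : Ordinal} (h : LexSplit s t γ) : s ≠ t := by
  rintro rfl
  exact lt_irrefl _ h.2.2.2

lemma LexSplit.not_bLex {s t : BSeq} {γ : Ordinal} (h : LexSplit s t γ) : ¬ BLex t s := by
  obtain ⟨hγs, hγt, hagree, hlt⟩ := h
  rintro (⟨⟨-, hext⟩, -⟩ | ⟨δ, -, -, hagree', hlt'⟩)
  · exact hlt.ne (hext γ hγt)
  · rcases lt_trichotomy δ γ with hδ | rfl | hδ
    · exact hlt'.ne (hagree δ hδ).symm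
    · exact lt_asymm hlt hlt'
    · exact hlt.ne' (hagree' γ hδ)

lemma exists_lexSplit_of_ne {s t : BSeq} (hs : IsBSeq s) (ht : IsBSeq t)
    (hlen : bLen s = bLen t) (hne : s ≠ t) : ∃ γ, LexSplit s t γ ∨ LexSplit t s γ := by
  have hdiff : {β | bVal s β ≠ bVal t β}.Nonempty := by
    by_contra! hsame
    exact hne (Prod.ext hlen (funext fun β => not_not.1 fun h => hsame.subset h))
  obtain ⟨γ, hγ, hmin⟩ := wellFounded_lt.has_min _ hdiff
  have hagree : ∀ β < γ, bVal s β = bVal t β := fun β hβ => not_not.1 fun h => hmin β h hβ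
  have hγs : γ < bLen s := lt_of_not_ge fun h => hγ ((hs γ h).trans (ht γ (hlen ▸ h)).symm)
  refine ⟨γ, (Ne.lt_or_gt hγ).imp (fun hlt => ⟨hγs, hlen ▸ hγs, hagree, hlt⟩)
    (fun hgt => ⟨hlen ▸ hγs, hγs, fun β hβ => (hagree β hβ).symm, hgt⟩)⟩

lemma Cardinal.mk_lt_lift_of_subset_Iio {κ : Cardinal.{u}} {A : Set Ordinal.{u}} {b : Ordinal.{u}}
    (hb : b < κ.ord) (hA : A ⊆ Iio b) : #A < lift.{u + 1} κ :=
  calc #A ≤ #(Iio b) := mk_le_mk_of_subset hA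
    _ = lift.{u + 1} b.card := mk_Iio_ordinal b
    _ < lift.{u + 1} κ := lift_lt.2 (lt_ord.1 hb)

def IsLarge (κ : Cardinal.{u}) (H : Set Ordinal.{u}) (ι : Ordinal.{u} → BSeq) (t : BSeq) : Prop :=
  lift.{u + 1} κ ≤ #{α : Ordinal | α ∈ H ∧ BExt t (ι α)}

def LexMonotoneOn (ι : Ordinal.{u} → BSeq) (H : Set Ordinal.{u}) : Prop :=
  (∀ α ∈ H, ∀ β ∈ H, α < β → BLex (ι α) (ι β)) ∨ (∀ α ∈ H, ∀ β ∈ H, α < β → BLex (ι β) (ι α))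

section Large

variable {κ : Cardinal.{u}} {H : Set Ordinal.{u}} {ι : Ordinal.{u} → BSeq}

lemma IsLarge.nonempty {t : BSeq} (h : IsLarge κ H ι t) (hκ : κ ≠ 0) : ∃ α ∈ H, BExt t (ι α) := by
  have : #{α : Ordinal | α ∈ H ∧ BExt t (ι α)} ≠ 0 :=
    (pos_iff_ne_zero.2 (by simpa using hκ)).trans_le h |>.ne'
  obtain ⟨⟨α, hα⟩⟩ := mk_ne_zero_iff.1 this
  exact ⟨α, hα⟩

lemma IsLarge.bRestrict {t : BSeq} (h : IsLarge κ H ι t) {γ : Ordinal} (hγ : γ ≤ bLen t) :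
    IsLarge κ H ι (bRestrict (bVal t) γ) :=
  h.trans <| mk_le_mk_of_subset fun _ ⟨hαH, hext⟩ =>
    ⟨hαH, bExt_bRestrict (hγ.trans hext.1) fun β hβ => hext.2 β (hβ.trans_le hγ)⟩

lemma not_isLarge_of_lexSplit (hH : H ⊆ Iio κ.ord) (hmono : LexMonotoneOn ι H) (hκ : κ ≠ 0)
    {s s' : BSeq} {γ : Ordinal} (hsplit : LexSplit s s' γ)
    (hs : IsLarge κ H ι s) (hs' : IsLarge κ H ι s') : False := by
  have hsep : ∀ α ∈ H, ∀ α' ∈ H, BExt s (ι α) → BExt s' (ι α') →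
      α ≠ α' ∧ ¬ BLex (ι α') (ι α) := fun α _ α' _ hα hα' =>
    have h := hsplit.of_bExt hα hα'
    ⟨fun heq => h.ne (congrArg ι heq), h.not_bLex⟩
  rcases hmono with hinc | hdec
  · obtain ⟨α', hα'H, hα'⟩ := hs'.nonempty hκ
    have hbound : {α | α ∈ H ∧ BExt s (ι α)} ⊆ Iio α' := by
      rintro α ⟨hαH, hα⟩
      obtain ⟨hne, hnlex⟩ := hsep α hαH α' hα'H hα hα'
      exact lt_of_le_of_ne (not_lt.1 fun hlt => hnlex (hinc α' hα'H α hαH hlt)) hne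
    exact (mk_lt_lift_of_subset_Iio (hH hα'H) hbound).not_ge hs
  · obtain ⟨α, hαH, hα⟩ := hs.nonempty hκ
    have hbound : {α' | α' ∈ H ∧ BExt s' (ι α')} ⊆ Iio α := by
      rintro α' ⟨hα'H, hα'⟩
      obtain ⟨hne, hnlex⟩ := hsep α hαH α' hα'H hα hα'
      exact lt_of_le_of_ne (not_lt.1 fun hlt => hnlex (hdec α hαH α' hα'H hlt)) hne.symm
    exact (mk_lt_lift_of_subset_Iio (hH hαH) hbound).not_ge hs'

lemma eq_of_isLarge (hH : H ⊆ Iio κ.ord)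
    (hmono : LexMonotoneOn ι H) (hκ : κ ≠ 0) {t t' : BSeq} (ht : IsBSeq t) (ht' : IsBSeq t')
    (hlen : bLen t = bLen t')
    (hl : IsLarge κ H ι t) (hl' : IsLarge κ H ι t') : t = t' := by
  by_contra hne
  obtain ⟨γ, hsplit | hsplit⟩ := exists_lexSplit_of_ne ht ht' hlen hne
  · exact not_isLarge_of_lexSplit hH hmono hκ hsplit hl hl'
  · exact not_isLarge_of_lexSplit hH hmono hκ hsplit hl' hl

end Large

lemma exists_agree_of_coherent (t : Ordinal → BSeq) (c : Ordinal)
    (hcoh : ∀ γ γ', γ ≤ γ' → γ' < c → ∀ β < γ, bVal (t γ') β = bVal (t γ) β) :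
    ∃ x : Ordinal → Fin 2, ∀ γ < c, ∀ β < γ, bVal (t γ) β = x β :=
  ⟨fun β => bVal (t (β + 1)) β, fun γ hγ β hβ =>
    hcoh (β + 1) γ (Order.add_one_le_of_lt hβ) hγ β (Order.lt_add_one_iff.2 le_rfl)⟩

theorem stmt4_general (κ : Cardinal.{u})
    (ι : Ordinal → BSeq)
    (H : Set Ordinal) (hH : H ⊆ Set.Iio κ.ord)
    (hmono : (∀ α ∈ H, ∀ β ∈ H, α < β → BLex (ι α) (ι β)) ∨
             (∀ α ∈ H, ∀ β ∈ H, α < β → BLex (ι β) (ι α)))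
    (hbig : ∀ γ < κ.ord, ∃ t : BSeq, IsBSeq t ∧ bLen t = γ ∧
      Cardinal.mk ↥{α : Ordinal | α ∈ H ∧ BExt t (ι α)} = Cardinal.lift.{u + 1} κ) :
    ∃ x : Ordinal → Fin 2, ∀ γ < κ.ord, ∃ γ', γ ≤ γ' ∧ γ' < κ.ord ∧
      ∃ β < κ.ord, BExt (bRestrict x γ') (ι β) := by
  have hκ : ∀ {γ}, γ < κ.ord → κ ≠ 0 := fun hγ hκ => by simp [hκ] at hγ
  have hchoice : ∀ γ, ∃ t : BSeq, γ < κ.ord → IsBSeq t ∧ bLen t = γ ∧ IsLarge κ H ι t := by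
    intro γ
    by_cases hγ : γ < κ.ord
    · obtain ⟨t, hseq, hlen, hcard⟩ := hbig γ hγ
      exact ⟨t, fun _ => ⟨hseq, hlen, hcard.ge⟩⟩
    · exact ⟨default, fun h => absurd h hγ⟩
  choose t ht using hchoice
  have hcoh : ∀ γ γ', γ ≤ γ' → γ' < κ.ord → ∀ β < γ, bVal (t γ') β = bVal (t γ) β := by
    intro γ γ' hle hγ' β hβ
    obtain ⟨-, hlen', hlarge'⟩ := ht γ' hγ'
    obtain ⟨hseq, hlen, hlarge⟩ := ht γ (hle.trans_lt hγ')
    have hrestrict : bRestrict (bVal (t γ')) γ = t γ :=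
      eq_of_isLarge hH hmono (hκ hγ') (isBSeq_bRestrict _ _) hseq hlen.symm
        (hlarge'.bRestrict (hle.trans_eq hlen'.symm)) hlarge
    rw [← hrestrict, bVal_bRestrict_of_lt hβ]
  obtain ⟨x, hx⟩ := exists_agree_of_coherent t κ.ord hcoh
  refine ⟨x, fun γ hγ => ⟨γ, le_rfl, hγ, ?_⟩⟩
  obtain ⟨-, hlen, hlarge⟩ := ht γ hγ
  obtain ⟨α, hαH, hext⟩ := hlarge.nonempty (hκ hγ)
  exact ⟨α, hH hαH, bExt_bRestrict (hlen.symm.trans_le hext.1) fun β hβ =>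
    (hext.2 β (hβ.trans_eq hlen.symm)).trans (hx γ hγ β hβ)⟩

/-- Let `κ` be an uncountable regular cardinal and `ι` an
injection from `κ` into the binary sequences of length `< κ`.  Suppose `H ⊆ κ`
has cardinality `κ`, `ι` is `<_lex`-monotone on `H`, and for every `γ < κ`
there is a binary sequence `t` of length `γ` such that
`{α ∈ H : t ⊆ ι(α)}` has cardinality `κ`.  Then there is `x : κ → 2` such that
`{γ < κ : ∃ β < κ, x↾γ ⊆ ι(β)}` is unbounded in `κ`. -/
theorem stmt4 (κ : Cardinal.{u}) (hreg : κ.IsRegular) (hunc : Cardinal.aleph0 < κ)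
    (ι : Ordinal → BSeq)
    (hιval : ∀ α < κ.ord, IsBSeq (ι α) ∧ bLen (ι α) < κ.ord)
    (hιinj : Set.InjOn ι (Set.Iio κ.ord))
    (H : Set Ordinal) (hH : H ⊆ Set.Iio κ.ord)
    (hHcard : Cardinal.mk ↥H = Cardinal.lift.{u + 1} κ)
    (hmono : (∀ α ∈ H, ∀ β ∈ H, α < β → BLex (ι α) (ι β)) ∨
             (∀ α ∈ H, ∀ β ∈ H, α < β → BLex (ι β) (ι α)))
    (hbig : ∀ γ < κ.ord, ∃ t : BSeq, IsBSeq t ∧ bLen t = γ ∧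
      Cardinal.mk ↥{α : Ordinal | α ∈ H ∧ BExt t (ι α)} = Cardinal.lift.{u + 1} κ) :
    ∃ x : Ordinal → Fin 2, ∀ γ < κ.ord, ∃ γ', γ ≤ γ' ∧ γ' < κ.ord ∧
      ∃ β < κ.ord, BExt (bRestrict x γ') (ι β) :=
  stmt4_general κ ι H hH hmono hbig
end

section
/- Let κ be an uncountable regular cardinal and let c be a function from the 2-element subsets of κ to 2. Then there exists an injection ι from κ into the binary sequences of length < κ, with ι(β) of length β+1 for every β < κ, such that: if there exists x : κ → 2 for which the set {α < κ : there is β < κ with x↾α ⊆ ι(β)} is unbounded in κ, then there exists a c-homogeneous subset of κ that is unbounded in κ. -/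
/-!
Let `ι(β)` list the colours `c {α, β}` for `α < β` (padded with `0` at `β`). If `x↾α ⊆ ι(β)`
for unboundedly many `α`, then above every `γ < κ` there is `β ≥ γ` with `c {δ, β} = x δ` for all
`δ ≤ γ`. Making this choice at the supremum of the earlier terms (which stays below `κ` by
regularity) yields an increasing unbounded sequence `(h ξ)_{ξ < κ}` with `c {h η, h ξ} = x (h η)`
whenever `η < ξ`. The terms on which `x` takes a value attained unboundedly often then form an
unbounded homogeneous set.
-/

open Cardinal Set

noncomputable def colourSeq (c : Finset Ordinal → Fin 2) (β : Ordinal) : BSeq :=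
  (β + 1, fun α => if α < β then c {α, β} else 0)

section colourSeq

variable (c : Finset Ordinal → Fin 2)

theorem bLen_colourSeq (β : Ordinal) : bLen (colourSeq c β) = β + 1 := rfl

theorem isBSeq_colourSeq (β : Ordinal) : IsBSeq (colourSeq c β) := by
  intro δ hδ
  have : ¬δ < β := fun h => (Order.lt_add_one_iff.mpr h.le).not_ge hδ
  simp only [bVal, colourSeq, if_neg this]

theorem colourSeq_injective : Function.Injective (colourSeq c) := fun _ _ h =>
  Order.succ_injective (congrArg bLen h)

theorem exists_colourSeq_agrees {o : Ordinal} (ho : Order.IsSuccLimit o) {x : Ordinal → Fin 2}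
    (hx : ∀ γ < o, ∃ α, γ ≤ α ∧ α < o ∧ ∃ β < o, BExt (bRestrict x α) (colourSeq c β))
    {γ : Ordinal} (hγ : γ < o) :
    ∃ β < o, γ ≤ β ∧ ∀ δ ≤ γ, δ < β → x δ = c {δ, β} := by
  obtain ⟨α, hγα, -, β, hβ, hlen, hval⟩ := hx (γ + 1) (ho.add_one_lt hγ)
  have hγα : γ < α := Order.add_one_le_iff.mp hγα
  refine ⟨β, hβ, Order.lt_add_one_iff.mp (hγα.trans_le hlen), fun δ hδγ hδβ => ?_⟩
  have hδα : δ < α := hδγ.trans_lt hγα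
  simpa [bVal, bRestrict, colourSeq, hδβ, hδα] using (hval δ hδα).symm

end colourSeq

theorem iSup_Iio_add_one_lt_ord {κ : Cardinal} (hκ : κ.IsRegular) {ξ : Ordinal} (hξ : ξ < κ.ord)
    {g : Ordinal → Ordinal} (hg : ∀ η < ξ, g η < κ.ord) : ⨆ η : Iio ξ, g η + 1 < κ.ord := by
  apply Ordinal.lift_iSup_add_one_lt_of_lt_cof (f := fun η : Iio ξ => g η) _ fun η => hg η η.2
  rwa [← Ordinal.lift_cof, hκ.cof_ord, mk_Iio_ordinal, lift_lift, lift_lt, ← lt_ord]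

noncomputable def strictChain (f : Ordinal → Ordinal) (ξ : Ordinal) : Ordinal :=
  f (max ξ (⨆ η : Iio ξ, strictChain f η + 1))
termination_by ξ
decreasing_by exact η.2

theorem exists_strictChain_eq {κ : Cardinal} (hκ : κ.IsRegular) {f : Ordinal → Ordinal}
    (hf : ∀ γ < κ.ord, f γ < κ.ord) {ξ : Ordinal} (hξ : ξ < κ.ord) :
    ∃ γ < κ.ord, ξ ≤ γ ∧ (∀ η < ξ, strictChain f η < γ) ∧ strictChain f ξ = f γ := by
  induction ξ using WellFoundedLT.induction with
  | _ ξ ih =>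
    have hlt : ∀ η < ξ, strictChain f η < κ.ord := fun η hη => by
      obtain ⟨γ, hγ, -, -, heq⟩ := ih η hη (hη.trans hξ)
      exact heq ▸ hf γ hγ
    refine ⟨_, max_lt hξ (iSup_Iio_add_one_lt_ord hκ hξ hlt), le_max_left _ _,
      fun η hη => ?_, by rw [strictChain]⟩
    exact (Order.lt_add_one_iff.mpr le_rfl).trans_le <|
      (Ordinal.le_iSup (fun η : Iio ξ => strictChain f η + 1) ⟨η, hη⟩).trans (le_max_right _ _)

theorem exists_chain_of_forall_exists {κ : Cardinal} (hκ : κ.IsRegular)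
    {R : Ordinal → Ordinal → Prop} (hR : ∀ γ < κ.ord, ∃ β < κ.ord, γ ≤ β ∧ R γ β)
    (hanti : ∀ γ γ' β, γ ≤ γ' → R γ' β → R γ β) :
    ∃ h : Ordinal → Ordinal, (∀ ξ < κ.ord, ξ ≤ h ξ ∧ h ξ < κ.ord) ∧
      ∀ ξ < κ.ord, ∀ η < ξ, h η < h ξ ∧ R (h η) (h ξ) := by
  choose! f hf_lt hf_le hf_R using hR
  refine ⟨strictChain f, fun ξ hξ => ?_, fun ξ hξ η hηξ => ?_⟩ <;>
  obtain ⟨γ, hγ, hξγ, hbelow, heq⟩ := exists_strictChain_eq hκ hf_lt hξ <;>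
  rw [heq]
  · exact ⟨hξγ.trans (hf_le γ hγ), hf_lt γ hγ⟩
  · exact ⟨(hbelow η hηξ).trans_le (hf_le γ hγ), hanti _ _ _ (hbelow η hηξ).le (hf_R γ hγ)⟩

theorem exists_unbounded_fiber {o : Ordinal} {S : Set Ordinal} (hS : ∀ γ < o, ∃ α ∈ S, γ ≤ α)
    (g : Ordinal → Fin 2) : ∃ i, ∀ γ < o, ∃ α ∈ S, g α = i ∧ γ ≤ α := by
  by_contra! hbdd
  obtain ⟨γ₀, hγ₀, h₀⟩ := hbdd 0
  obtain ⟨γ₁, hγ₁, h₁⟩ := hbdd 1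
  obtain ⟨α, hα, hγα⟩ := hS _ (max_lt hγ₀ hγ₁)
  rcases max_le_iff.mp hγα with ⟨hα₀, hα₁⟩
  obtain hi | hi : g α = 0 ∨ g α = 1 := by omega
  · exact (h₀ α hα hi).not_ge hα₀
  · exact (h₁ α hα hi).not_ge hα₁

theorem stmt6_general (κ : Cardinal) (hreg : κ.IsRegular)
    (c : Finset Ordinal → Fin 2) :
    ∃ ι : Ordinal → BSeq,
      (∀ β < κ.ord, IsBSeq (ι β) ∧ bLen (ι β) = β + 1) ∧
      Set.InjOn ι (Set.Iio κ.ord) ∧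
      ((∃ x : Ordinal → Fin 2, ∀ γ < κ.ord, ∃ α, γ ≤ α ∧ α < κ.ord ∧
          ∃ β < κ.ord, BExt (bRestrict x α) (ι β)) →
        ∃ H : Set Ordinal, H ⊆ Set.Iio κ.ord ∧
          (∃ i : Fin 2, ∀ α ∈ H, ∀ β ∈ H, α < β → c {α, β} = i) ∧
          ∀ γ < κ.ord, ∃ α ∈ H, γ ≤ α) := by
  refine ⟨colourSeq c, fun β _ => ⟨isBSeq_colourSeq c β, bLen_colourSeq c β⟩,
    (colourSeq_injective c).injOn, ?_⟩
  rintro ⟨x, hx⟩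
  obtain ⟨h, hh_bound, hh_chain⟩ := exists_chain_of_forall_exists hreg
    (R := fun γ β => ∀ δ ≤ γ, δ < β → x δ = c {δ, β})
    (fun γ hγ => exists_colourSeq_agrees c (isSuccLimit_ord hreg.aleph0_le) hx hγ)
    (fun γ γ' β hγγ' hR δ hδ => hR δ (hδ.trans hγγ'))
  have hmono : StrictMonoOn h (Iio κ.ord) := fun η _ ξ hξ hηξ => (hh_chain ξ hξ η hηξ).1
  obtain ⟨i, hi⟩ := exists_unbounded_fiber (S := h '' Iio κ.ord)
    (fun γ hγ => ⟨h γ, mem_image_of_mem h hγ, (hh_bound γ hγ).1⟩) x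
  refine ⟨{α ∈ h '' Iio κ.ord | x α = i}, ?_, ⟨i, ?_⟩, fun γ hγ => ?_⟩
  · rintro _ ⟨⟨ξ, hξ, rfl⟩, -⟩
    exact (hh_bound ξ hξ).2
  · rintro _ ⟨⟨η, hη, rfl⟩, hxη⟩ _ ⟨⟨ξ, hξ, rfl⟩, -⟩ hlt
    have hηξ : η < ξ := (hmono.lt_iff_lt hη hξ).mp hlt
    exact ((hh_chain ξ hξ η hηξ).2 (h η) le_rfl hlt).symm.trans hxη
  · obtain ⟨α, hα, hxα, hγα⟩ := hi γ hγ
    exact ⟨α, ⟨hα, hxα⟩, hγα⟩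

/-- Let `κ` be an uncountable regular cardinal and `c` a colouring
of the `2`-element subsets of `κ` with values in `2`.  Then there is an
injection `ι` from `κ` into the binary sequences of length `< κ`, with `ι(β)`
of length `β + 1` for every `β < κ`, such that: if there is `x : κ → 2` for
which the set `{α < κ : ∃ β < κ, x↾α ⊆ ι(β)}` is unbounded in `κ`, then there
is a `c`-homogeneous subset of `κ` that is unbounded in `κ`. -/
theorem stmt6 (κ : Cardinal) (hreg : κ.IsRegular) (hunc : Cardinal.aleph0 < κ)
    (c : Finset Ordinal → Fin 2) :
    ∃ ι : Ordinal → BSeq,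
      (∀ β < κ.ord, IsBSeq (ι β) ∧ bLen (ι β) = β + 1) ∧
      Set.InjOn ι (Set.Iio κ.ord) ∧
      ((∃ x : Ordinal → Fin 2, ∀ γ < κ.ord, ∃ α, γ ≤ α ∧ α < κ.ord ∧
          ∃ β < κ.ord, BExt (bRestrict x α) (ι β)) →
        ∃ H : Set Ordinal, H ⊆ Set.Iio κ.ord ∧
          (∃ i : Fin 2, ∀ α ∈ H, ∀ β ∈ H, α < β → c {α, β} = i) ∧
          ∀ γ < κ.ord, ∃ α ∈ H, γ ≤ α) :=
  stmt6_general κ hreg c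
end

section
/- Let κ be an uncountable regular cardinal and let δ < κ be an ordinal such that there exists an injection from κ into the set of functions from δ to 2. Then there exists a function c from the 2-element subsets of κ to 2 such that no c-homogeneous subset of κ is unbounded in κ. -/
/-!
Colour a pair `α < β` by whether `ι α` is lexicographically below `ι β` (Sierpiński's colouring).
A cofinal homogeneous set then carries a lex-monotone `κ`-sequence of functions `δ → 2`
(after reversing the bits if it is decreasing), and there is none, by induction on `δ`:
let `d α` be the first place where the term at `α` and the next term differ; by
regularity of `κ` some value `γ < δ` of `d` is taken cofinally often, and along that fiber
the sequence is already lex increasing below `γ`.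
-/

open Set Cardinal

def IsFirstDiff {β : Type*} [LT β] (γ : Ordinal) (f g : Ordinal → β) : Prop :=
  (∀ x < γ, f x = g x) ∧ f γ < g γ

def LexLTBelow {β : Type*} [LT β] (δ : Ordinal) (f g : Ordinal → β) : Prop :=
  ∃ γ < δ, IsFirstDiff γ f g

def CofinalBelow (o : Ordinal) (S : Set Ordinal) : Prop :=
  ∀ γ < o, ∃ α ∈ S, γ ≤ α

theorem lexLTBelow_or_lexLTBelow {β : Type*} [LinearOrder β] {δ : Ordinal} {f g : Ordinal → β}
    (h : ∃ γ < δ, f γ ≠ g γ) : LexLTBelow δ f g ∨ LexLTBelow δ g f := by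
  obtain ⟨γ, ⟨hγδ, hne⟩, hmin⟩ := Ordinal.lt_wf.has_min {γ | γ < δ ∧ f γ ≠ g γ} h
  have hagree : ∀ x < γ, f x = g x := fun x hx => by
    by_contra hfg
    exact hmin x ⟨hx.trans hγδ, hfg⟩ hx
  rcases hne.lt_or_gt with hlt | hgt
  · exact Or.inl ⟨γ, hγδ, hagree, hlt⟩
  · exact Or.inr ⟨γ, hγδ, fun x hx => (hagree x hx).symm, hgt⟩

theorem lexLTBelow_rev_iff {δ : Ordinal} {n : ℕ} {f g : Ordinal → Fin n} :
    LexLTBelow δ (Fin.rev ∘ f) (Fin.rev ∘ g) ↔ LexLTBelow δ g f := by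
  simp only [LexLTBelow, IsFirstDiff, Function.comp_apply, Fin.rev_inj, Fin.rev_lt_rev, eq_comm]

theorem Fin.two_not_lt_lt {x y z : Fin 2} (hxy : x < y) (hyz : y < z) : False := by
  omega

theorem LexLTBelow.of_isFirstDiff {δ γ : Ordinal} {a a' b b' : Ordinal → Fin 2}
    (ha : IsFirstDiff γ a a') (hb : IsFirstDiff γ b b') (h : LexLTBelow δ a' b) :
    LexLTBelow γ a b := by
  obtain ⟨η, -, hη_eq, hη_lt⟩ := h
  rcases lt_trichotomy η γ with hηγ | rfl | hγη
  · refine ⟨η, hηγ, fun x hx => (ha.1 x (hx.trans hηγ)).trans (hη_eq x hx), ?_⟩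
    rwa [ha.1 η hηγ]
  · exact (Fin.two_not_lt_lt hη_lt hb.2).elim
  · exact (Fin.two_not_lt_lt ha.2 ((hη_eq γ hγη).trans_lt hb.2)).elim

theorem CofinalBelow.exists_gt {o : Ordinal} {S : Set Ordinal} (hS : CofinalBelow o S)
    (ho : Order.IsSuccLimit o) {α : Ordinal} (hα : α < o) : ∃ β ∈ S, α < β := by
  obtain ⟨β, hβ, hle⟩ := hS _ (ho.succ_lt hα)
  exact ⟨β, hβ, (Order.lt_succ α).trans_le hle⟩

theorem CofinalBelow.exists_cofinalBelow_fiber {κ : Cardinal} (hκ : κ.IsRegular) {S : Set Ordinal}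
    (hS : CofinalBelow κ.ord S) {δ : Ordinal} (hδ : δ < κ.ord) {d : Ordinal → Ordinal}
    (hd : ∀ α ∈ S, d α < δ) : ∃ γ < δ, CofinalBelow κ.ord {α ∈ S | d α = γ} := by
  by_contra! hbounded
  simp only [CofinalBelow] at hbounded
  push Not at hbounded
  choose b hbκ hb using hbounded
  let B : Iio δ → Ordinal := fun γ => b γ γ.2
  have hBκ : ⨆ γ, B γ < κ.ord := by
    refine Ordinal.lift_iSup_lt_of_lt_cof ?_ fun γ => hbκ γ γ.2
    rw [mk_Iio_ordinal, lift_lift, ← Ordinal.lift_cof, hκ.cof_ord, lift_lt]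
    exact Cardinal.lt_ord.1 hδ
  obtain ⟨α, hα, hle⟩ := hS _ hBκ
  have hbdd : BddAbove (range B) := ⟨κ.ord, by rintro _ ⟨γ, rfl⟩; exact (hbκ γ γ.2).le⟩
  exact (hb _ (hd α hα) α ⟨hα, rfl⟩).not_ge
    (le_trans (le_ciSup hbdd ⟨d α, hd α hα⟩) hle)

theorem not_forall_lexLTBelow_of_cofinalBelow {κ : Cardinal} (hκ : κ.IsRegular)
    (f : Ordinal → Ordinal → Fin 2) {δ : Ordinal} (hδ : δ < κ.ord) {S : Set Ordinal}
    (hSκ : S ⊆ Iio κ.ord) (hS : CofinalBelow κ.ord S) :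
    ¬ ∀ α ∈ S, ∀ β ∈ S, α < β → LexLTBelow δ (f α) (f β) := by
  induction δ using WellFoundedLT.induction generalizing S with
  | ind δ IH =>
  intro hmono
  have hnext : ∀ α ∈ S, ∃ β ∈ S, α < β := fun α hα =>
    hS.exists_gt (isSuccLimit_ord hκ.aleph0_le) (hSκ hα)
  let next α := sInf {β | β ∈ S ∧ α < β}
  have next_spec : ∀ α ∈ S, next α ∈ S ∧ α < next α := fun α hα => csInf_mem (hnext α hα)
  have next_le : ∀ α, ∀ β ∈ S, α < β → next α ≤ β := fun α β hβ hαβ => csInf_le' ⟨hβ, hαβ⟩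
  choose! d hdδ hd using fun α hα => hmono α hα (next α) (next_spec α hα).1 (next_spec α hα).2
  obtain ⟨γ, hγδ, hγ⟩ := hS.exists_cofinalBelow_fiber hκ hδ hdδ
  refine IH γ hγδ (hγδ.trans hδ) (fun α hα => hSκ hα.1) hγ ?_
  rintro α ⟨hα, rfl⟩ β ⟨hβ, hβγ⟩ hαβ
  rcases (next_le α β hβ hαβ).eq_or_lt with heq | hlt
  · have hα_lt := (hd α hα).2
    have hβ_lt := (hd β hβ).2
    rw [heq] at hα_lt
    rw [hβγ] at hβ_lt
    exact (Fin.two_not_lt_lt hα_lt hβ_lt).elim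
  · exact (hmono _ (next_spec α hα).1 β hβ hlt).of_isFirstDiff (hd α hα) (hβγ ▸ hd β hβ)

open Classical in
noncomputable def lexColouring (δ : Ordinal) (ι : Ordinal → Ordinal → Fin 2) :
    Finset Ordinal → Fin 2 :=
  fun s => if ∀ α ∈ s, ∀ β ∈ s, α < β → LexLTBelow δ (ι α) (ι β) then 1 else 0

theorem lexColouring_pair_eq_one_iff {δ : Ordinal} {ι : Ordinal → Ordinal → Fin 2}
    {α β : Ordinal} (hαβ : α < β) :
    lexColouring δ ι {α, β} = 1 ↔ LexLTBelow δ (ι α) (ι β) := by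
  simp [lexColouring, hαβ, hαβ.not_gt]

theorem stmt7_general (κ : Cardinal) (hreg : κ.IsRegular)
    (δ : Ordinal) (hδ : δ < κ.ord)
    (hex : ∃ ι : Ordinal → Ordinal → Fin 2,
      ∀ α < κ.ord, ∀ β < κ.ord, α ≠ β → ∃ γ < δ, ι α γ ≠ ι β γ) :
    ∃ c : Finset Ordinal → Fin 2, ∀ H : Set Ordinal, H ⊆ Set.Iio κ.ord →
      (∃ i : Fin 2, ∀ α ∈ H, ∀ β ∈ H, α < β → c {α, β} = i) →
      ¬ (∀ γ < κ.ord, ∃ α ∈ H, γ ≤ α) := by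
  obtain ⟨ι, hι⟩ := hex
  refine ⟨lexColouring δ ι, fun H hH ⟨i, hi⟩ hHκ => ?_⟩
  fin_cases i
  · refine not_forall_lexLTBelow_of_cofinalBelow hreg (fun α => Fin.rev ∘ ι α) hδ hH hHκ
      fun α hα β hβ hαβ => lexLTBelow_rev_iff.2 ?_
    have hnot : ¬ LexLTBelow δ (ι α) (ι β) := by
      rw [← lexColouring_pair_eq_one_iff hαβ, hi α hα β hβ hαβ]
      decide
    exact (lexLTBelow_or_lexLTBelow (hι α (hH hα) β (hH hβ) hαβ.ne)).resolve_left hnot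
  · exact not_forall_lexLTBelow_of_cofinalBelow hreg ι hδ hH hHκ
      fun α hα β hβ hαβ => (lexColouring_pair_eq_one_iff hαβ).1 (hi α hα β hβ hαβ)

/-- Let `κ` be an uncountable regular cardinal and `δ < κ` an
ordinal such that there is an injection from `κ` into the set of functions
`δ → 2`.  Then there is a colouring `c` of the `2`-element subsets of `κ` with
values in `2` such that no `c`-homogeneous subset of `κ` is unbounded in `κ`.

Here ordinals below `κ.ord` represent elements of `κ`, functions `δ → 2` are
represented by functions `Ordinal → Fin 2` (only values below `δ` matter, and
injectivity is injectivity of the restrictions to `δ`). -/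
theorem stmt7 (κ : Cardinal) (hreg : κ.IsRegular) (hunc : Cardinal.aleph0 < κ)
    (δ : Ordinal) (hδ : δ < κ.ord)
    (hex : ∃ ι : Ordinal → Ordinal → Fin 2,
      ∀ α < κ.ord, ∀ β < κ.ord, α ≠ β → ∃ γ < δ, ι α γ ≠ ι β γ) :
    ∃ c : Finset Ordinal → Fin 2, ∀ H : Set Ordinal, H ⊆ Set.Iio κ.ord →
      (∃ i : Fin 2, ∀ α ∈ H, ∀ β ∈ H, α < β → c {α, β} = i) →
      ¬ (∀ γ < κ.ord, ∃ α ∈ H, γ ≤ α) :=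
  stmt7_general κ hreg δ hδ hex
end

section
/- Let κ be an uncountable regular cardinal and let D be a set of binary sequences of length < κ of cardinality κ such that every x : κ → 2 has exactly one initial segment in D, i.e., there is exactly one t ∈ D with t ⊆ x. Then the generalized Baire space ^κκ of κ and the generalized Cantor space ^κ2 of κ are homeomorphic. -/
/-- The underlying set of the generalized Baire space of `o`: all functions
from `{α | α < o}` to `{α | α < o}`. -/
def GBaire (o : Ordinal) : Type _ := ↥(Set.Iio o) → ↥(Set.Iio o)

/-- The underlying set of the generalized Cantor space of `o`: all functions
from `{α | α < o}` to `2`. -/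
def GCantor (o : Ordinal) : Type _ := ↥(Set.Iio o) → Fin 2

/-- The topology of the generalized Baire space, generated by the basic open
sets `N_s = {x | x↾α = s↾α}` for `α < o`. -/
def baireTopology (o : Ordinal) : TopologicalSpace (GBaire o) :=
  TopologicalSpace.generateFrom
    {U : Set (GBaire o) | ∃ α : Ordinal, α < o ∧ ∃ s : GBaire o,
      U = {x : GBaire o | ∀ β : ↥(Set.Iio o), (β : Ordinal) < α → x β = s β}}

/-- The topology of the generalized Cantor space, generated by the basic open
sets `N_s = {x | x↾α = s↾α}` for `α < o`. -/
def cantorTopology (o : Ordinal) : TopologicalSpace (GCantor o) :=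
  TopologicalSpace.generateFrom
    {U : Set (GCantor o) | ∃ α : Ordinal, α < o ∧ ∃ s : GCantor o,
      U = {x : GCantor o | ∀ β : ↥(Set.Iio o), (β : Ordinal) < α → x β = s β}}

universe u

/-!
Fix a bijection `e : κ ≃ D`. A point `x : κ → κ` is coded by the transfinite concatenation
`e (x 0) ⌢ e (x 1) ⌢ ⋯ : κ → 2`. Conversely, since every `y : κ → 2` has exactly one initial
segment in `D`, `y` can be cut greedily into consecutive blocks from `D`, and reading these
blocks back through `e` inverts the coding. The blocks have positive length because `D` has
more than one element, so the first `α` bits of the code only depend on `x↾α`; and by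
regularity of `κ` the first `α < κ` blocks of `y` end before `κ`, so they only depend on a
proper initial segment of `y`. Hence both maps are continuous.
-/

namespace BlockCoding

open Ordinal Set Order

section Offsets

variable {g g' : Ordinal.{u} → Ordinal.{u} → Ordinal.{u}}

/-- The start of block `α` in a transfinite concatenation in which block `β`, starting at
position `p`, has length `g β p`. -/
noncomputable def offsets (g : Ordinal.{u} → Ordinal.{u} → Ordinal.{u}) (α : Ordinal.{u}) :
    Ordinal.{u} :=
  limitRecOn α 0 (fun β p => p + g β p) fun β _ p => ⨆ γ : Iio β, p γ γ.2

@[simp]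
theorem offsets_zero : offsets g 0 = 0 := limitRecOn_zero ..

theorem offsets_add_one (α : Ordinal.{u}) :
    offsets g (α + 1) = offsets g α + g α (offsets g α) := limitRecOn_add_one ..

theorem offsets_limit {α : Ordinal.{u}} (hα : IsSuccLimit α) :
    offsets g α = ⨆ γ : Iio α, offsets g γ := limitRecOn_limit _ _ _ _ hα

theorem offsets_mono : Monotone (offsets g) := by
  intro α β hαβ
  induction β using limitRecOn with
  | zero => rw [nonpos_iff_eq_zero.1 hαβ]
  | add_one β ih =>
    rcases hαβ.eq_or_lt with rfl | hlt
    · rfl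
    · rw [offsets_add_one]
      exact (ih (lt_add_one_iff.1 hlt)).trans le_self_add
  | limit β hlim ih =>
    rcases hαβ.eq_or_lt with rfl | hlt
    · rfl
    · rw [offsets_limit hlim]
      exact Ordinal.le_iSup (fun γ : Iio β => offsets g γ) ⟨α, hlt⟩

theorem offsets_isNormal (hg : ∀ β p, 0 < g β p) : IsNormal (offsets g) := by
  refine .of_succ_lt (fun α => ?_) fun {α} hα => ?_
  · rw [succ_eq_add_one, offsets_add_one]
    exact lt_add_of_pos_right _ (hg _ _)
  · rw [offsets_limit hα, ← sSup_image']
    exact isLUB_csSup ⟨_, mem_image_of_mem _ (show 0 ∈ Iio α from hα.bot_lt)⟩ bddAbove_of_small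

theorem offsets_congr {γ : Ordinal.{u}} (h : ∀ β < γ, g' β (offsets g β) = g β (offsets g β)) :
    ∀ α ≤ γ, offsets g' α = offsets g α := by
  intro α hα
  induction α using limitRecOn with
  | zero => simp
  | add_one α ih =>
    have hαγ : α < γ := (lt_add_one α).trans_le hα
    rw [offsets_add_one, offsets_add_one, ih hαγ.le, h α hαγ]
  | limit α hlim ih =>
    rw [offsets_limit hlim, offsets_limit hlim]
    exact iSup_congr fun β => ih β β.2 (β.2.le.trans hα)

theorem offsets_lt_ord {κ : Cardinal.{u}} (hκ : κ.IsRegular) (hg : ∀ β p, g β p < κ.ord)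
    {α : Ordinal.{u}} (hα : α < κ.ord) : offsets g α < κ.ord := by
  induction α using limitRecOn with
  | zero => simpa using hα
  | add_one α ih =>
    rw [offsets_add_one]
    exact isPrincipal_add_ord hκ.aleph0_le (ih ((lt_add_one α).trans hα)) (hg _ _)
  | limit α hlim ih =>
    rw [offsets_limit hlim]
    refine lift_iSup_lt_of_lt_cof ?_ fun β => ih β β.2 (β.2.trans hα)
    rw [Cardinal.lift_id'.{u, u + 1}, Cardinal.mk_Iio_ordinal, ← lift_cof, hκ.cof_ord,
      Cardinal.lift_lt]
    exact Cardinal.lt_ord.1 hα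

theorem exists_offsets_le_lt (hg : ∀ β p, 0 < g β p) (ξ : Ordinal.{u}) :
    ∃ α, offsets g α ≤ ξ ∧ ξ < offsets g (α + 1) := by
  simpa using (offsets_isNormal hg).exists_map_le_lt_map_succ (x := ξ) (by simp)

noncomputable def blockIndex (g : Ordinal.{u} → Ordinal.{u} → Ordinal.{u}) (ξ : Ordinal.{u}) :
    Ordinal.{u} :=
  sInf {α | ξ < offsets g (α + 1)}

theorem blockIndex_eq {α ξ : Ordinal.{u}} (h₁ : offsets g α ≤ ξ)
    (h₂ : ξ < offsets g (α + 1)) : blockIndex g ξ = α := by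
  refine le_antisymm (csInf_le' h₂) (le_csInf ⟨α, h₂⟩ fun β hβ => not_lt.1 fun hβα => ?_)
  exact (hβ.trans_le (offsets_mono (add_one_le_of_lt hβα))).not_ge h₁

end Offsets

section Concat

def lengths (X : Ordinal.{u} → BSeq.{u, u}) : Ordinal.{u} → Ordinal.{u} → Ordinal.{u} :=
  fun β _ => bLen (X β)

noncomputable def concat (X : Ordinal.{u} → BSeq.{u, u}) (ξ : Ordinal.{u}) : Fin 2 :=
  bVal (X (blockIndex (lengths X) ξ)) (ξ - offsets (lengths X) (blockIndex (lengths X) ξ))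

def tail (y : Ordinal.{u} → Fin 2) (δ : Ordinal.{u}) : Ordinal.{u} → Fin 2 := fun ζ => y (δ + ζ)

variable {X X' : Ordinal.{u} → BSeq.{u, u}}

theorem concat_of_mem {α ξ : Ordinal.{u}}
    (h₁ : offsets (lengths X) α ≤ ξ) (h₂ : ξ < offsets (lengths X) (α + 1)) :
    concat X ξ = bVal (X α) (ξ - offsets (lengths X) α) := by
  rw [concat, blockIndex_eq h₁ h₂]

theorem bExtFun_tail_concat (α : Ordinal.{u}) :
    BExtFun (X α) (tail (concat X) (offsets (lengths X) α)) := by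
  intro ζ hζ
  rw [tail, concat_of_mem le_self_add, Ordinal.add_sub_cancel]
  rw [offsets_add_one]
  exact add_lt_add_right hζ _

theorem concat_congr (hX : ∀ β, 0 < bLen (X β)) {ξ : Ordinal.{u}} (h : ∀ β ≤ ξ, X' β = X β) :
    concat X' ξ = concat X ξ := by
  obtain ⟨α, h₁, h₂⟩ := exists_offsets_le_lt (g := lengths X) (fun β _ => hX β) ξ
  have hαξ : α ≤ ξ := ((offsets_isNormal (fun β _ => hX β)).strictMono.le_apply).trans h₁
  have hoff : ∀ β ≤ α + 1, offsets (lengths X') β = offsets (lengths X) β :=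
    offsets_congr fun β hβ => by rw [lengths, lengths, h β (lt_add_one_iff.1 hβ |>.trans hαξ)]
  rw [concat_of_mem h₁ h₂, concat_of_mem ((hoff α le_self_add).trans_le h₁)
    (h₂.trans_eq (hoff _ le_rfl).symm), hoff α le_self_add, h α hαξ]

end Concat

section Parsing

variable {D : Set BSeq.{u, u}} (huniq : ∀ y : Ordinal.{u} → Fin 2, ∃! t, t ∈ D ∧ BExtFun t y)

noncomputable def headBlock (y : Ordinal.{u} → Fin 2) : BSeq.{u, u} := (huniq y).exists.choose

theorem headBlock_mem (y : Ordinal.{u} → Fin 2) : headBlock huniq y ∈ D :=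
  (huniq y).exists.choose_spec.1

theorem bExtFun_headBlock (y : Ordinal.{u} → Fin 2) : BExtFun (headBlock huniq y) y :=
  (huniq y).exists.choose_spec.2

theorem headBlock_eq {t : BSeq.{u, u}} {y : Ordinal.{u} → Fin 2} (ht : t ∈ D)
    (hty : BExtFun t y) : headBlock huniq y = t :=
  (huniq y).unique ⟨headBlock_mem huniq y, bExtFun_headBlock huniq y⟩ ⟨ht, hty⟩

theorem headBlock_congr {y y' : Ordinal.{u} → Fin 2}
    (h : ∀ ζ < bLen (headBlock huniq y), y' ζ = y ζ) : headBlock huniq y' = headBlock huniq y :=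
  headBlock_eq huniq (headBlock_mem huniq y) fun ζ hζ =>
    (h ζ hζ).trans (bExtFun_headBlock huniq y ζ hζ)

noncomputable def parseLengths (y : Ordinal.{u} → Fin 2) :
    Ordinal.{u} → Ordinal.{u} → Ordinal.{u} :=
  fun _ p => bLen (headBlock huniq (tail y p))

noncomputable def parse (y : Ordinal.{u} → Fin 2) (α : Ordinal.{u}) : BSeq.{u, u} :=
  headBlock huniq (tail y (offsets (parseLengths huniq y) α))

theorem parse_mem (y : Ordinal.{u} → Fin 2) (α : Ordinal.{u}) : parse huniq y α ∈ D :=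
  headBlock_mem huniq _

theorem offsets_lengths_parse (y : Ordinal.{u} → Fin 2) :
    offsets (lengths (parse huniq y)) = offsets (parseLengths huniq y) :=
  funext fun α => offsets_congr (g := parseLengths huniq y) (g' := lengths (parse huniq y))
    (fun _ _ => rfl) α le_rfl

theorem parse_concat {X : Ordinal.{u} → BSeq.{u, u}} (hX : ∀ β, X β ∈ D) :
    parse huniq (concat X) = X := by
  have hblock : ∀ β, headBlock huniq (tail (concat X) (offsets (lengths X) β)) = X β :=
    fun β => headBlock_eq huniq (hX β) (bExtFun_tail_concat β)
  have hoff : ∀ α, offsets (parseLengths huniq (concat X)) α = offsets (lengths X) α :=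
    fun α => offsets_congr (fun β _ => by rw [parseLengths, hblock, lengths]) α le_rfl
  funext α
  rw [parse, hoff, hblock]

theorem concat_parse (hpos : ∀ t ∈ D, 0 < bLen t) (y : Ordinal.{u} → Fin 2) :
    concat (parse huniq y) = y := by
  funext ξ
  obtain ⟨α, h₁, h₂⟩ := exists_offsets_le_lt (g := lengths (parse huniq y))
    (fun β _ => hpos _ (parse_mem huniq y β)) ξ
  rw [concat_of_mem h₁ h₂]
  rw [offsets_lengths_parse] at h₁ h₂ ⊢
  rw [offsets_add_one] at h₂
  have hlt : ξ - offsets (parseLengths huniq y) α < bLen (parse huniq y α) :=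
    Ordinal.sub_lt_of_lt_add h₂ (hpos _ (parse_mem huniq y α))
  rw [parse, ← bExtFun_headBlock huniq _ _ hlt, tail, Ordinal.add_sub_cancel_of_le h₁]

theorem parse_congr {y y' : Ordinal.{u} → Fin 2} {α : Ordinal.{u}}
    (h : ∀ ζ < offsets (parseLengths huniq y) α, y' ζ = y ζ) {β : Ordinal.{u}} (hβ : β < α) :
    parse huniq y' β = parse huniq y β := by
  have hblock : ∀ β < α, headBlock huniq (tail y' (offsets (parseLengths huniq y) β)) =
      headBlock huniq (tail y (offsets (parseLengths huniq y) β)) := by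
    refine fun β hβ => headBlock_congr huniq fun ζ hζ => h _ ?_
    calc offsets (parseLengths huniq y) β + ζ
        < offsets (parseLengths huniq y) (β + 1) := by
          rw [offsets_add_one]; exact add_lt_add_right hζ _
      _ ≤ offsets (parseLengths huniq y) α := offsets_mono (add_one_le_of_lt hβ)
  have hoff : offsets (parseLengths huniq y') β = offsets (parseLengths huniq y) β :=
    offsets_congr (fun γ hγ => by rw [parseLengths, parseLengths, hblock γ hγ]) β hβ.le
  rw [parse, parse, hoff, hblock β hβ]

end Parsing

theorem bLen_pos_of_nontrivial {D : Set BSeq.{u, u}}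
    (huniq : ∀ y : Ordinal.{u} → Fin 2, ∃! t, t ∈ D ∧ BExtFun t y) [Nontrivial D]
    {t : BSeq.{u, u}} (ht : t ∈ D) : 0 < bLen t := by
  refine pos_iff_ne_zero.2 fun ht0 => ?_
  have heq : ∀ s ∈ D, s = t := fun s hs =>
    (huniq (bVal s)).unique ⟨hs, fun _ _ => rfl⟩ ⟨ht, fun β hβ => by simp [ht0] at hβ⟩
  obtain ⟨a, b, hab⟩ := exists_pair_ne D
  exact hab (Subtype.ext ((heq a a.2).trans (heq b b.2).symm))

section Topology

open TopologicalSpace Topology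

variable {o o' : Ordinal.{u}} {A B : Type*}

def cylinder (x : Iio o → A) (α : Ordinal.{u}) : Set (Iio o → A) :=
  {x' | ∀ β : Iio o, (β : Ordinal) < α → x' β = x β}

/-- `baireTopology o` and `cantorTopology o` are, definitionally, this topology for
`A = Iio o` and `A = Fin 2`. -/
def prefixTopology (o : Ordinal.{u}) (A : Type*) : TopologicalSpace (Iio o → A) :=
  generateFrom {U | ∃ α < o, ∃ x, U = cylinder x α}

theorem continuous_of_mapsTo_cylinder {f : (Iio o → A) → (Iio o' → B)}
    (hf : ∀ x, ∀ α < o', ∃ δ < o, MapsTo f (cylinder x δ) (cylinder (f x) α)) :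
    Continuous[prefixTopology o A, prefixTopology o' B] f := by
  let := prefixTopology o A
  refine continuous_generateFrom_iff.2 ?_
  rintro _ ⟨α, hα, s, rfl⟩
  refine isOpen_iff_forall_mem_open.2 fun x hx => ?_
  obtain ⟨δ, hδ, hmaps⟩ := hf x α hα
  refine ⟨cylinder x δ, fun x' hx' β hβ => ?_, isOpen_generateFrom_of_mem ⟨δ, hδ, x, rfl⟩,
    fun _ _ => rfl⟩
  exact (hmaps hx' β hβ).trans (hx β hβ)

end Topology

section Coding

open Topology

variable {κ : Cardinal.{u}} {D : Set BSeq.{u, u}}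
  (huniq : ∀ y : Ordinal.{u} → Fin 2, ∃! t, t ∈ D ∧ BExtFun t y) (e : Iio κ.ord ≃ D) (d : D)

noncomputable def blocks (x : GBaire κ.ord) (β : Ordinal.{u}) : BSeq.{u, u} :=
  if h : β < κ.ord then e (x ⟨β, h⟩) else d

theorem blocks_mem (x : GBaire κ.ord) (β : Ordinal.{u}) : blocks e d x β ∈ D := by
  unfold blocks
  split <;> exact Subtype.prop _

noncomputable def encode (x : GBaire κ.ord) : GCantor κ.ord := fun ξ => concat (blocks e d x) ξ

noncomputable def extendByZero (y : GCantor κ.ord) (ξ : Ordinal.{u}) : Fin 2 :=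
  if h : ξ < κ.ord then y ⟨ξ, h⟩ else 0

noncomputable def decode (y : GCantor κ.ord) : GBaire κ.ord :=
  fun β => e.symm ⟨parse huniq (extendByZero y) β, parse_mem huniq _ _⟩

theorem decode_encode (hκ : κ.IsRegular) (hDlen : ∀ t ∈ D, bLen t < κ.ord) (x : GBaire κ.ord) :
    decode huniq e (encode e d x) = x := by
  funext β
  have hlt : offsets (parseLengths huniq (concat (blocks e d x))) (β + 1) < κ.ord :=
    offsets_lt_ord hκ (fun _ _ => hDlen _ (headBlock_mem huniq _))
      ((Cardinal.isSuccLimit_ord hκ.aleph0_le).add_one_lt β.2)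
  have hparse : parse huniq (extendByZero (encode e d x)) β = e (x β) := by
    rw [parse_congr huniq (fun ζ hζ => dif_pos (hζ.trans hlt)) (lt_add_one β.1),
      parse_concat huniq (blocks_mem e d x), blocks, dif_pos (mem_Iio.1 β.2)]
  simp only [decode, hparse, Subtype.coe_eta, Equiv.symm_apply_apply]

theorem encode_decode (hpos : ∀ t ∈ D, 0 < bLen t) (y : GCantor κ.ord) :
    encode e d (decode huniq e y) = y := by
  funext ξ
  have hblocks : ∀ γ ≤ ξ.1, blocks e d (decode huniq e y) γ = parse huniq (extendByZero y) γ :=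
    fun γ hγ => by
      rw [blocks, dif_pos (hγ.trans_lt ξ.2), decode, Equiv.apply_symm_apply]
  rw [encode, concat_congr (fun β => hpos _ (parse_mem huniq _ β)) hblocks,
    concat_parse huniq hpos, extendByZero, dif_pos (mem_Iio.1 ξ.2)]

theorem continuous_encode (hpos : ∀ t ∈ D, 0 < bLen t) :
    Continuous[baireTopology κ.ord, cantorTopology κ.ord] (encode e d) := by
  refine continuous_of_mapsTo_cylinder fun x α hα => ⟨α, hα, fun x' hx' β hβ => ?_⟩
  refine concat_congr (fun γ => hpos _ (blocks_mem e d x γ)) fun γ hγ => ?_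
  unfold blocks
  split_ifs with h
  · rw [hx' ⟨γ, h⟩ (hγ.trans_lt hβ)]
  · rfl

theorem continuous_decode (hκ : κ.IsRegular) (hDlen : ∀ t ∈ D, bLen t < κ.ord) :
    Continuous[cantorTopology κ.ord, baireTopology κ.ord] (decode huniq e) := by
  refine continuous_of_mapsTo_cylinder fun y α hα => ?_
  have hδ : offsets (parseLengths huniq (extendByZero y)) α < κ.ord :=
    offsets_lt_ord hκ (fun _ _ => hDlen _ (headBlock_mem huniq _)) hα
  refine ⟨_, hδ, fun y' hy' β hβ => ?_⟩
  have hagree : ∀ ζ < offsets (parseLengths huniq (extendByZero y)) α,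
      extendByZero y' ζ = extendByZero y ζ := fun ζ hζ => by
    simp only [extendByZero, dif_pos (hζ.trans hδ)]
    exact hy' _ hζ
  simp only [decode, parse_congr huniq hagree hβ]

end Coding

end BlockCoding

theorem stmt11_general (κ : Cardinal.{u}) (hreg : κ.IsRegular)
    (D : Set BSeq)
    (hD : ∀ t ∈ D, IsBSeq t ∧ bLen t < κ.ord)
    (hDcard : Cardinal.mk ↥D = Cardinal.lift.{u + 1} κ)
    (huniq : ∀ x : Ordinal → Fin 2, ∃! t : BSeq, t ∈ D ∧ BExtFun t x) :
    Nonempty (@Homeomorph (GBaire κ.ord) (GCantor κ.ord)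
      (baireTopology κ.ord) (cantorTopology κ.ord)) := by
  have hDlen : ∀ t ∈ D, bLen t < κ.ord := fun t ht => (hD t ht).2
  obtain ⟨e⟩ : Nonempty (Set.Iio κ.ord ≃ D) := by
    rw [← Cardinal.eq, Cardinal.mk_Iio_ordinal, Cardinal.card_ord, hDcard]
  have : Nontrivial D := by
    rw [← Cardinal.one_lt_iff_nontrivial, hDcard, Cardinal.one_lt_lift_iff]
    exact Cardinal.one_lt_aleph0.trans_le hreg.aleph0_le
  have hpos : ∀ t ∈ D, 0 < bLen t := fun _ => BlockCoding.bLen_pos_of_nontrivial huniq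
  let d : D := Classical.arbitrary D
  exact ⟨@Homeomorph.mk _ _ (baireTopology _) (cantorTopology _)
    ⟨BlockCoding.encode e d, BlockCoding.decode huniq e,
      BlockCoding.decode_encode huniq e d hreg hDlen, BlockCoding.encode_decode huniq e d hpos⟩
    (BlockCoding.continuous_encode e d hpos) (BlockCoding.continuous_decode huniq e hreg hDlen)⟩

/-- Let `κ` be an uncountable regular cardinal and `D` a set of
binary sequences of length `< κ`, of cardinality `κ`, such that every
`x : κ → 2` has exactly one initial segment in `D`.  Then the generalized Baire
space `^κ κ` of `κ` and the generalized Cantor space `^κ 2` of `κ` are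
homeomorphic. -/
theorem stmt11 (κ : Cardinal.{u}) (hreg : κ.IsRegular)
    (hunc : Cardinal.aleph0 < κ)
    (D : Set BSeq)
    (hD : ∀ t ∈ D, IsBSeq t ∧ bLen t < κ.ord)
    (hDcard : Cardinal.mk ↥D = Cardinal.lift.{u + 1} κ)
    (huniq : ∀ x : Ordinal → Fin 2, ∃! t : BSeq, t ∈ D ∧ BExtFun t x) :
    Nonempty (@Homeomorph (GBaire κ.ord) (GCantor κ.ord)
      (baireTopology κ.ord) (cantorTopology κ.ord)) :=
  stmt11_general κ hreg D hD hDcard huniq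
end

section
/- Let κ be an uncountable regular cardinal such that the set of all binary sequences of length < κ has cardinality κ. If there exists an injection ι from κ into the binary sequences of length < κ with the property that for every x : κ → 2 there is an ordinal α < κ such that there is no β < κ with x↾α ⊆ ι(β), then the generalized Baire space ^κκ of κ and the generalized Cantor space ^κ2 of κ are homeomorphic. -/
universe u

/-!
Let `W` be the set of minimal binary sequences of length `< κ` that have no extension among the
`ι β`. By the hypothesis on `ι`, `W` is a complete prefix code: every `x : κ → 2` has exactly one
initial segment in `W`. The sequences that do have an extension form a tree of size `κ`, and each
of them is an initial segment of a word of `W`; by regularity of `κ` this forces `|W| = κ`.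
Cutting `x` into consecutive words of `W` (taking suprema at limit stages, which stay below `κ` by
regularity) and replacing each word by its index under a bijection `κ ≃ W` is a homeomorphism
`^κ2 ≃ ^κκ`, because the first `α` indices depend exactly on `x` up to the `α`-th cut.
-/

namespace GeneralizedBaire

open Cardinal Set Order

section BlockStart

theorem _root_.StrictMono.eq_of_le_of_lt_add_one {f : Ordinal.{u} → Ordinal.{u}}
    (hf : StrictMono f) {a a' b : Ordinal.{u}} (h : f a ≤ b ∧ b < f (a + 1))
    (h' : f a' ≤ b ∧ b < f (a' + 1)) : a = a' :=
  le_antisymm (Order.lt_add_one_iff.mp (hf.lt_iff_lt.mp (h.1.trans_lt h'.2)))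
    (Order.lt_add_one_iff.mp (hf.lt_iff_lt.mp (h'.1.trans_lt h.2)))

variable {len : Ordinal.{u} → Ordinal.{u} → Ordinal.{u}}

/-- The `o`-th block starts at `g = blockStart len o` and has length `len o g`. -/
noncomputable def blockStart (len : Ordinal.{u} → Ordinal.{u} → Ordinal.{u}) (α : Ordinal.{u}) :
    Ordinal.{u} :=
  Ordinal.limitRecOn α 0 (fun o g => g + len o g) fun o _ IH => ⨆ i : Iio o, IH i.1 i.2

@[simp] lemma blockStart_zero : blockStart len 0 = 0 :=
  Ordinal.limitRecOn_zero ..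

lemma blockStart_add_one (α : Ordinal.{u}) :
    blockStart len (α + 1) = blockStart len α + len α (blockStart len α) :=
  Ordinal.limitRecOn_add_one ..

lemma blockStart_of_isSuccLimit {α : Ordinal.{u}} (hα : IsSuccLimit α) :
    blockStart len α = ⨆ i : Iio α, blockStart len i :=
  Ordinal.limitRecOn_limit _ _ _ _ hα

lemma isNormal_blockStart (hlen : ∀ o g, 0 < len o g) : IsNormal (blockStart len) := by
  refine IsNormal.of_succ_lt (fun α => ?_) fun {α} hα => ?_
  · rw [succ_eq_add_one, blockStart_add_one]
    exact lt_add_of_pos_right _ (hlen _ _)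
  · have : Nonempty (Iio α) := ⟨⟨0, hα.pos⟩⟩
    rw [blockStart_of_isSuccLimit hα, image_eq_range]
    exact isLUB_ciSup Ordinal.bddAbove_of_small

lemma blockStart_lt_ord {κ : Cardinal.{u}} (hκ : κ.IsRegular)
    (hlen : ∀ o g, o < κ.ord → g < κ.ord → len o g < κ.ord) {α : Ordinal.{u}} (hα : α < κ.ord) :
    blockStart len α < κ.ord := by
  induction α using Ordinal.limitRecOn with
  | zero => simpa using hα
  | add_one α ih =>
    have hα' : α < κ.ord := (lt_add_one α).trans hα
    rw [blockStart_add_one]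
    exact Ordinal.isPrincipal_add_ord hκ.aleph0_le (ih hα') (hlen _ _ hα' (ih hα'))
  | limit α hlim ih =>
    rw [blockStart_of_isSuccLimit hlim]
    apply Ordinal.lift_iSup_lt_of_lt_cof
    · rwa [← Ordinal.lift_cof, hκ.cof_ord, mk_Iio_ordinal, lift_lift, lift_lt, ← lt_ord]
    · exact fun i => ih i.1 i.2 (i.2.trans hα)

end BlockStart

section BinarySequences

lemma bVal_bRestrict_of_lt (y : Ordinal.{u} → Fin 2) {β γ : Ordinal.{u}} (h : β < γ) :
    bVal (bRestrict y γ) β = y β :=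
  if_pos h

lemma isBSeq_bRestrict (y : Ordinal.{u} → Fin 2) (γ : Ordinal.{u}) : IsBSeq (bRestrict y γ) :=
  fun _ hβ => if_neg (not_lt.mpr hβ)

lemma bRestrict_eq_bRestrict_iff {y y' : Ordinal.{u} → Fin 2} {γ γ' : Ordinal.{u}} :
    bRestrict y' γ' = bRestrict y γ ↔ γ' = γ ∧ EqOn y' y (Iio γ) := by
  constructor
  · intro h
    obtain rfl : γ' = γ := congrArg bLen h
    refine ⟨rfl, fun β (hβ : β < γ') => ?_⟩
    simpa [bVal_bRestrict_of_lt _ hβ] using congrArg (bVal · β) h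
  · rintro ⟨rfl, h⟩
    refine Prod.ext rfl (funext fun β => ?_)
    by_cases hβ : β < γ'
    · simp [bRestrict, hβ, h hβ]
    · simp [bRestrict, hβ]

lemma bRestrict_bVal_bRestrict (y : Ordinal.{u} → Fin 2) {γ δ : Ordinal.{u}} (h : γ ≤ δ) :
    bRestrict (bVal (bRestrict y δ)) γ = bRestrict y γ :=
  bRestrict_eq_bRestrict_iff.mpr ⟨rfl, fun _ hβ => bVal_bRestrict_of_lt y (lt_of_lt_of_le hβ h)⟩

lemma _root_.IsBSeq.bRestrict_bVal_bLen {t : BSeq.{u, u}} (ht : IsBSeq t) :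
    bRestrict (bVal t) (bLen t) = t := by
  refine Prod.ext rfl (funext fun β => ?_)
  by_cases hβ : β < bLen t
  · exact if_pos hβ
  · exact (if_neg hβ).trans (ht β (not_lt.mp hβ)).symm

end BinarySequences

def shift (y : Ordinal.{u} → Fin 2) (g : Ordinal.{u}) : Ordinal.{u} → Fin 2 :=
  fun β => y (g + β)

lemma eqOn_Iio_add_iff {y y' : Ordinal.{u} → Fin 2} {g d : Ordinal.{u}} :
    EqOn y' y (Iio (g + d)) ↔ EqOn y' y (Iio g) ∧ EqOn (shift y' g) (shift y g) (Iio d) := by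
  refine ⟨fun h => ⟨h.mono (Iio_subset_Iio le_self_add),
    fun β (hβ : β < d) => h (add_lt_add_right hβ g)⟩, fun ⟨h₁, h₂⟩ β (hβ : β < g + d) => ?_⟩
  rcases lt_or_ge β g with hβg | hβg
  · exact h₁ hβg
  · rw [← Ordinal.add_sub_cancel_of_le hβg]
    exact h₂ ((Ordinal.sub_lt_of_le hβg).mpr hβ)

/-- `p y` is the length of the unique word of a complete prefix code that is an initial segment
of `y`. -/
structure IsPrefixCode (p : (Ordinal.{u} → Fin 2) → Ordinal.{u}) : Prop where
  pos : ∀ y, 0 < p y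
  eq_of_eqOn : ∀ {y y'}, EqOn y' y (Iio (p y)) → p y' = p y

section PrefixCode

variable {p : (Ordinal.{u} → Fin 2) → Ordinal.{u}}

noncomputable def firstBlock (p : (Ordinal.{u} → Fin 2) → Ordinal.{u}) (y : Ordinal.{u} → Fin 2) :
    BSeq.{u, u} :=
  bRestrict y (p y)

lemma IsPrefixCode.firstBlock_eq_firstBlock_iff (hp : IsPrefixCode p)
    {y y' : Ordinal.{u} → Fin 2} : firstBlock p y' = firstBlock p y ↔ EqOn y' y (Iio (p y)) := by
  rw [firstBlock, firstBlock, bRestrict_eq_bRestrict_iff]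
  exact ⟨fun ⟨h, h'⟩ => h ▸ h', fun h => ⟨hp.eq_of_eqOn h, h⟩⟩

noncomputable def boundary (p : (Ordinal.{u} → Fin 2) → Ordinal.{u}) (y : Ordinal.{u} → Fin 2) :
    Ordinal.{u} → Ordinal.{u} :=
  blockStart fun _ g => p (shift y g)

noncomputable def block (p : (Ordinal.{u} → Fin 2) → Ordinal.{u}) (y : Ordinal.{u} → Fin 2)
    (α : Ordinal.{u}) : BSeq.{u, u} :=
  firstBlock p (shift y (boundary p y α))

lemma boundary_add_one (y : Ordinal.{u} → Fin 2) (α : Ordinal.{u}) :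
    boundary p y (α + 1) = boundary p y α + p (shift y (boundary p y α)) :=
  blockStart_add_one α

lemma boundary_lt_ord {κ : Cardinal.{u}} (hκ : κ.IsRegular) (hpκ : ∀ y, p y < κ.ord)
    (y : Ordinal.{u} → Fin 2) {α : Ordinal.{u}} (hα : α < κ.ord) : boundary p y α < κ.ord :=
  blockStart_lt_ord hκ (fun _ _ _ _ => hpκ _) hα

lemma IsPrefixCode.isNormal_boundary (hp : IsPrefixCode p) (y : Ordinal.{u} → Fin 2) :
    IsNormal (boundary p y) :=
  isNormal_blockStart fun _ _ => hp.pos _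

lemma IsPrefixCode.boundary_congr (hp : IsPrefixCode p) {y y' : Ordinal.{u} → Fin 2}
    {α : Ordinal.{u}} (h : EqOn y' y (Iio (boundary p y α))) :
    boundary p y' α = boundary p y α := by
  induction α using Ordinal.limitRecOn with
  | zero => simp [boundary]
  | add_one α ih =>
    rw [boundary_add_one, eqOn_Iio_add_iff] at h
    rw [boundary_add_one, boundary_add_one, ih h.1, hp.eq_of_eqOn h.2]
  | limit α hα ih =>
    rw [boundary, boundary, blockStart_of_isSuccLimit hα, blockStart_of_isSuccLimit hα]
    exact iSup_congr fun i =>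
      ih i.1 i.2 (h.mono (Iio_subset_Iio ((hp.isNormal_boundary y).monotone i.2.le)))

lemma IsPrefixCode.block_eq_block_iff (hp : IsPrefixCode p) {y y' : Ordinal.{u} → Fin 2}
    (α : Ordinal.{u}) :
    (∀ β < α, block p y' β = block p y β) ↔ EqOn y' y (Iio (boundary p y α)) := by
  induction α using Ordinal.limitRecOn with
  | zero => simp [boundary]
  | add_one α ih =>
    simp only [Order.lt_add_one_iff, le_iff_lt_or_eq, or_imp, forall_and, forall_eq, ih,
      boundary_add_one, eqOn_Iio_add_iff]
    refine and_congr_right fun h => ?_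
    rw [block, block, hp.boundary_congr h, hp.firstBlock_eq_firstBlock_iff]
  | limit α hα ih =>
    have hnormal := hp.isNormal_boundary y
    constructor
    · intro h β hβ
      obtain ⟨γ, hγ, hβγ⟩ := (hnormal.lt_iff_exists_lt hα).mp hβ
      exact (ih γ hγ).mp (fun δ hδ => h δ (hδ.trans hγ)) hβγ
    · intro h β hβ
      have hβ' : β + 1 < α := hα.add_one_lt hβ
      exact (ih _ hβ').mpr (h.mono (Iio_subset_Iio (hnormal.monotone hβ'.le))) β (lt_add_one β)

noncomputable def concatStart (p : (Ordinal.{u} → Fin 2) → Ordinal.{u})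
    (Y : Ordinal.{u} → Ordinal.{u} → Fin 2) : Ordinal.{u} → Ordinal.{u} :=
  blockStart fun o _ => p (Y o)

/-- The concatenation of the words `firstBlock p (Y a)`, `a` ranging over all ordinals. -/
noncomputable def concat (p : (Ordinal.{u} → Fin 2) → Ordinal.{u})
    (Y : Ordinal.{u} → Ordinal.{u} → Fin 2) (b : Ordinal.{u}) : Fin 2 :=
  let a := Classical.epsilon fun a => concatStart p Y a ≤ b ∧ b < concatStart p Y (a + 1)
  Y a (b - concatStart p Y a)

lemma IsPrefixCode.eqOn_shift_concat (hp : IsPrefixCode p)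
    (Y : Ordinal.{u} → Ordinal.{u} → Fin 2) (a : Ordinal.{u}) :
    EqOn (shift (concat p Y) (concatStart p Y a)) (Y a) (Iio (p (Y a))) := by
  intro j (hj : j < p (Y a))
  have hmono : StrictMono (concatStart p Y) :=
    (isNormal_blockStart fun _ _ => hp.pos _).strictMono
  have hmem : concatStart p Y a ≤ concatStart p Y a + j ∧
      concatStart p Y a + j < concatStart p Y (a + 1) := by
    refine ⟨le_self_add, ?_⟩
    rw [concatStart, blockStart_add_one]
    exact add_lt_add_right hj _
  have hindex := hmono.eq_of_le_of_lt_add_one (Classical.epsilon_spec (⟨a, hmem⟩ : ∃ a',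
    concatStart p Y a' ≤ concatStart p Y a + j ∧ concatStart p Y a + j < concatStart p Y (a' + 1)))
    hmem
  simp only [shift, concat, hindex, Ordinal.add_sub_cancel]

lemma IsPrefixCode.boundary_concat (hp : IsPrefixCode p)
    (Y : Ordinal.{u} → Ordinal.{u} → Fin 2) : boundary p (concat p Y) = concatStart p Y := by
  refine ((hp.isNormal_boundary _).ext_iff (isNormal_blockStart fun _ _ => hp.pos _)).mpr
    ⟨by simp [boundary], fun a h => ?_⟩
  rw [succ_eq_add_one, boundary_add_one, blockStart_add_one, h]
  exact congrArg _ (hp.eq_of_eqOn (hp.eqOn_shift_concat Y a))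

lemma IsPrefixCode.block_concat (hp : IsPrefixCode p) (Y : Ordinal.{u} → Ordinal.{u} → Fin 2)
    (a : Ordinal.{u}) : block p (concat p Y) a = firstBlock p (Y a) := by
  rw [block, hp.boundary_concat, hp.firstBlock_eq_firstBlock_iff]
  exact hp.eqOn_shift_concat Y a

end PrefixCode

def basicOpens (o : Ordinal.{u}) (A : Type*) : Set (Set (Iio o → A)) :=
  {U | ∃ α : Ordinal, α < o ∧ ∃ s : Iio o → A,
    U = {x | ∀ β : Iio o, (β : Ordinal) < α → x β = s β}}

open Topology TopologicalSpace in
lemma continuous_generateFrom_basicOpens {o : Ordinal.{u}} {A B : Type*}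
    {f : (Iio o → A) → (Iio o → B)}
    (hf : ∀ x, ∀ α < o, ∃ δ < o, ∀ x', (∀ β : Iio o, (β : Ordinal) < δ → x' β = x β) →
      ∀ β : Iio o, (β : Ordinal) < α → f x' β = f x β) :
    Continuous[generateFrom (basicOpens o A), generateFrom (basicOpens o B)] f := by
  let := generateFrom (basicOpens o A)
  refine continuous_generateFrom_iff.mpr ?_
  rintro _ ⟨α, hα, s, rfl⟩
  refine isOpen_iff_forall_mem_open.mpr fun x hx => ?_
  obtain ⟨δ, hδ, hfx⟩ := hf x α hα
  exact ⟨{x' | ∀ β : Iio o, (β : Ordinal) < δ → x' β = x β},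
    fun x' hx' β hβ => (hfx x' hx' β hβ).trans (hx β hβ),
    isOpen_generateFrom_of_mem ⟨δ, hδ, x, rfl⟩, fun _ _ => rfl⟩

lemma baireTopology_eq (o : Ordinal.{u}) :
    baireTopology o = TopologicalSpace.generateFrom (basicOpens o (Iio o)) := rfl

lemma cantorTopology_eq (o : Ordinal.{u}) :
    cantorTopology o = TopologicalSpace.generateFrom (basicOpens o (Fin 2)) := rfl

noncomputable def extendByZero {o : Ordinal.{u}} (z : GCantor o) : Ordinal.{u} → Fin 2 :=
  fun β => if h : β < o then z ⟨β, h⟩ else 0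

lemma eqOn_extendByZero_iff {o δ : Ordinal.{u}} {z z' : GCantor o} :
    EqOn (extendByZero z') (extendByZero z) (Iio δ) ↔
      ∀ β : Iio o, (β : Ordinal) < δ → z' β = z β := by
  refine ⟨fun h β hβ => by simpa [extendByZero, show (β : Ordinal) < o from β.2] using h hβ,
    fun h β hβ => ?_⟩
  unfold extendByZero
  split_ifs with hβo
  exacts [h ⟨β, hβo⟩ hβ, rfl]

section Homeomorph

variable {p : (Ordinal.{u} → Fin 2) → Ordinal.{u}} {κ : Cardinal.{u}}

/-- Reads `z` as a concatenation of code words and lists their `e`-indices. -/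
noncomputable def toBaire (p : (Ordinal.{u} → Fin 2) → Ordinal.{u})
    (e : Iio κ.ord ≃ range (firstBlock p)) (z : GCantor κ.ord) : GBaire κ.ord :=
  fun b => e.symm ⟨block p (extendByZero z) b, mem_range_self _⟩

section

variable (e : Iio κ.ord ≃ range (firstBlock p))

lemma IsPrefixCode.toBaire_eqOn_iff (hp : IsPrefixCode p) {z z' : GCantor κ.ord}
    {α : Ordinal.{u}} (hα : α ≤ κ.ord) :
    (∀ β : Iio κ.ord, (β : Ordinal) < α → toBaire p e z' β = toBaire p e z β) ↔
      EqOn (extendByZero z') (extendByZero z) (Iio (boundary p (extendByZero z) α)) := by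
  rw [← hp.block_eq_block_iff]
  simp only [toBaire, e.symm.injective.eq_iff, Subtype.ext_iff]
  exact ⟨fun h β hβ => h ⟨β, hβ.trans_le hα⟩ hβ, fun h β hβ => h β hβ⟩

lemma IsPrefixCode.eqOn_of_toBaire_eqOn (hp : IsPrefixCode p) {z z' : GCantor κ.ord}
    {α : Ordinal.{u}} (hα : α ≤ κ.ord)
    (h : ∀ β : Iio κ.ord, (β : Ordinal) < α → toBaire p e z' β = toBaire p e z β) :
    ∀ β : Iio κ.ord, (β : Ordinal) < α → z' β = z β :=
  eqOn_extendByZero_iff.mp (((hp.toBaire_eqOn_iff e hα).mp h).mono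
    (Iio_subset_Iio (hp.isNormal_boundary _).strictMono.le_apply))

lemma IsPrefixCode.toBaire_injective (hp : IsPrefixCode p) : Function.Injective (toBaire p e) :=
  fun _ _ h => funext fun β => hp.eqOn_of_toBaire_eqOn e le_rfl (fun β _ => congrFun h β) β β.2

lemma IsPrefixCode.toBaire_surjective (hp : IsPrefixCode p) (hκ : κ.IsRegular)
    (hpκ : ∀ y, p y < κ.ord) : Function.Surjective (toBaire p e) := by
  intro x
  let Y : Ordinal.{u} → Ordinal.{u} → Fin 2 := fun a =>
    if h : a < κ.ord then rangeSplitting (firstBlock p) (e (x ⟨a, h⟩)) else 0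
  let z : GCantor κ.ord := fun b => concat p Y b
  refine ⟨z, funext fun b => ?_⟩
  have hb : boundary p (concat p Y) (b + 1) < κ.ord :=
    boundary_lt_ord hκ hpκ _ ((isSuccLimit_ord hκ.aleph0_le).add_one_lt b.2)
  have hblock : block p (extendByZero z) b = block p (concat p Y) b :=
    (hp.block_eq_block_iff (b + 1)).mpr (fun β hβ => dif_pos (hβ.trans hb)) b (lt_add_one _)
  rw [toBaire, e.symm_apply_eq]
  refine Subtype.ext ?_
  change block p (extendByZero z) b = _
  rw [hblock, hp.block_concat]
  simp only [Y, dif_pos (show (b : Ordinal) < κ.ord from b.2)]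
  exact apply_rangeSplitting _ _

end

theorem IsPrefixCode.nonempty_homeomorph (hp : IsPrefixCode p) (hκ : κ.IsRegular)
    (hpκ : ∀ y, p y < κ.ord) (e : Iio κ.ord ≃ range (firstBlock p)) :
    Nonempty (@Homeomorph (GBaire κ.ord) (GCantor κ.ord) (baireTopology κ.ord)
      (cantorTopology κ.ord)) := by
  let E := Equiv.ofBijective _ ⟨hp.toBaire_injective e, hp.toBaire_surjective e hκ hpκ⟩
  refine ⟨@Homeomorph.mk _ _ (baireTopology κ.ord) (cantorTopology κ.ord) E.symm ?_ ?_⟩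
  · rw [baireTopology_eq, cantorTopology_eq]
    refine continuous_generateFrom_basicOpens fun x α hα => ⟨α, hα, fun x' h β hβ => ?_⟩
    have hE : ∀ x, toBaire p e (E.symm x) = x := E.apply_symm_apply
    refine hp.eqOn_of_toBaire_eqOn e hα.le (fun γ hγ => ?_) β hβ
    exact (congrFun (hE x') γ).trans ((h γ hγ).trans (congrFun (hE x) γ).symm)
  · rw [baireTopology_eq, cantorTopology_eq]
    refine continuous_generateFrom_basicOpens fun z α hα => ⟨boundary p (extendByZero z) α,
      boundary_lt_ord hκ hpκ _ hα, fun z' h => ?_⟩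
    exact (hp.toBaire_eqOn_iff e hα.le).mpr (eqOn_extendByZero_iff.mpr h)

end Homeomorph

section Wavefront

variable {κ : Cardinal.{u}} {ι : Ordinal.{u} → BSeq.{u, u}}

def HasExt (κ : Cardinal.{u}) (ι : Ordinal.{u} → BSeq.{u, u}) (t : BSeq.{u, u}) : Prop :=
  ∃ β < κ.ord, BExt t (ι β)

noncomputable def escapeLength (κ : Cardinal.{u}) (ι : Ordinal.{u} → BSeq.{u, u})
    (y : Ordinal.{u} → Fin 2) : Ordinal.{u} :=
  sInf {α | ¬ HasExt κ ι (bRestrict y α)}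

lemma hasExt_of_lt_escapeLength {y : Ordinal.{u} → Fin 2} {γ : Ordinal.{u}}
    (h : γ < escapeLength κ ι y) : HasExt κ ι (bRestrict y γ) :=
  not_not.mp (notMem_of_lt_csInf' h)

variable (hesc : ∀ y : Ordinal.{u} → Fin 2, ∃ α < κ.ord, ¬ HasExt κ ι (bRestrict y α))
include hesc

lemma not_hasExt_escapeLength (y : Ordinal.{u} → Fin 2) :
    ¬ HasExt κ ι (bRestrict y (escapeLength κ ι y)) :=
  csInf_mem (s := {α | ¬ HasExt κ ι (bRestrict y α)}) (let ⟨α, _, h⟩ := hesc y; ⟨α, h⟩)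

lemma escapeLength_lt (y : Ordinal.{u} → Fin 2) : escapeLength κ ι y < κ.ord :=
  let ⟨_, hα, h⟩ := hesc y
  (csInf_le' h).trans_lt hα

lemma isPrefixCode_escapeLength (h0 : 0 < κ.ord) : IsPrefixCode (escapeLength κ ι) where
  pos y := pos_iff_ne_zero.mpr fun h => not_hasExt_escapeLength hesc y
    (h ▸ ⟨0, h0, zero_le, fun _ hβ => absurd hβ (not_lt_of_ge zero_le)⟩)
  eq_of_eqOn {y y'} h := by
    have hres : ∀ γ ≤ escapeLength κ ι y, bRestrict y' γ = bRestrict y γ := fun γ hγ =>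
      bRestrict_eq_bRestrict_iff.mpr ⟨rfl, h.mono (Iio_subset_Iio hγ)⟩
    refine le_antisymm (csInf_le' ?_) (not_lt.mp fun hlt => ?_)
    · show ¬ HasExt κ ι (bRestrict y' (escapeLength κ ι y))
      rw [hres _ le_rfl]
      exact not_hasExt_escapeLength hesc y
    · exact not_hasExt_escapeLength hesc y'
        ((hres _ hlt.le).symm ▸ hasExt_of_lt_escapeLength hlt)

lemma bLen_lt_escapeLength_bVal {β : Ordinal.{u}} (hβ : β < κ.ord) :
    bLen (ι β) < escapeLength κ ι (bVal (ι β)) :=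
  not_le.mp fun hle => not_hasExt_escapeLength hesc (bVal (ι β))
    ⟨β, hβ, hle, fun _ hγ => (bVal_bRestrict_of_lt _ hγ).symm⟩

lemma mk_range_firstBlock_escapeLength (hκ : κ.IsRegular)
    (hsize : #{t : BSeq | IsBSeq t ∧ bLen t < κ.ord} = lift.{u + 1} κ)
    (hmem : ∀ α < κ.ord, IsBSeq (ι α) ∧ bLen (ι α) < κ.ord) (hinj : InjOn ι (Iio κ.ord)) :
    #(range (firstBlock (escapeLength κ ι))) = lift.{u + 1} κ := by
  have hle : #(range (firstBlock (escapeLength κ ι))) ≤ lift.{u + 1} κ := by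
    refine hsize ▸ mk_le_mk_of_subset ?_
    rintro _ ⟨y, rfl⟩
    exact ⟨isBSeq_bRestrict _ _, escapeLength_lt hesc y⟩
  refine le_antisymm hle (not_lt.mp fun hlt => ?_)
  let W := range (firstBlock (escapeLength κ ι))
  let F : Iio κ.ord → Σ w : W, Iio (bLen w.1) := fun β =>
    ⟨⟨_, mem_range_self (bVal (ι β))⟩, ⟨bLen (ι β), bLen_lt_escapeLength_bVal hesc β.2⟩⟩
  let G : (Σ w : W, Iio (bLen w.1)) → BSeq.{u, u} := fun w => bRestrict (bVal w.1.1) w.2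
  have hGF : ∀ β : Iio κ.ord, G (F β) = ι β := fun β => by
    simp only [G, F, firstBlock]
    rw [bRestrict_bVal_bRestrict _ (bLen_lt_escapeLength_bVal hesc β.2).le]
    exact (hmem β β.2).1.bRestrict_bVal_bLen
  have hF : Function.Injective F :=
    .of_comp (f := G) fun β β' h =>
      Subtype.ext (hinj β.2 β'.2 (by simpa only [Function.comp_apply, hGF] using h))
  have hsum : sum (fun w : W => #(Iio (bLen w.1))) < lift.{u + 1} κ := by
    refine sum_lt_of_isRegular hκ.lift hlt fun w => ?_
    obtain ⟨y, hy⟩ := w.2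
    rw [mk_Iio_ordinal, lift_lt, ← lt_ord, ← hy]
    exact escapeLength_lt hesc y
  refine (mk_le_of_injective hF).not_gt ?_
  rwa [mk_sigma, mk_Iio_ordinal, card_ord]

end Wavefront

end GeneralizedBaire

open GeneralizedBaire

theorem stmt12_general (κ : Cardinal.{u}) (hreg : κ.IsRegular)
    (hsize : Cardinal.mk ↥{t : BSeq | IsBSeq t ∧ bLen t < κ.ord} =
      Cardinal.lift.{u + 1} κ)
    (hex : ∃ ι : Ordinal → BSeq,
      (∀ α < κ.ord, IsBSeq (ι α) ∧ bLen (ι α) < κ.ord) ∧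
      Set.InjOn ι (Set.Iio κ.ord) ∧
      ∀ x : Ordinal → Fin 2, ∃ α < κ.ord,
        ¬ ∃ β < κ.ord, BExt (bRestrict x α) (ι β)) :
    Nonempty (@Homeomorph (GBaire κ.ord) (GCantor κ.ord)
      (baireTopology κ.ord) (cantorTopology κ.ord)) := by
  obtain ⟨ι, hmem, hinj, hesc⟩ := hex
  have hcard : Cardinal.mk (Set.Iio κ.ord) =
      Cardinal.mk (Set.range (firstBlock (escapeLength κ ι))) := by
    rw [Cardinal.mk_Iio_ordinal, Cardinal.card_ord,
      mk_range_firstBlock_escapeLength hesc hreg hsize hmem hinj]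
  obtain ⟨e⟩ := Cardinal.eq.mp hcard
  exact (isPrefixCode_escapeLength hesc (Cardinal.isSuccLimit_ord hreg.aleph0_le).pos
    ).nonempty_homeomorph hreg (escapeLength_lt hesc) e

/-- Let `κ` be an uncountable regular cardinal such that the set
of all binary sequences of length `< κ` has cardinality `κ`.  If there is an
injection `ι` from `κ` into the binary sequences of length `< κ` such that for
every `x : κ → 2` there is `α < κ` such that no `β < κ` satisfies
`x↾α ⊆ ι(β)`, then the generalized Baire space `^κ κ` of `κ` and the
generalized Cantor space `^κ 2` of `κ` are homeomorphic. -/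
theorem stmt12 (κ : Cardinal.{u}) (hreg : κ.IsRegular)
    (hunc : Cardinal.aleph0 < κ)
    (hsize : Cardinal.mk ↥{t : BSeq | IsBSeq t ∧ bLen t < κ.ord} =
      Cardinal.lift.{u + 1} κ)
    (hex : ∃ ι : Ordinal → BSeq,
      (∀ α < κ.ord, IsBSeq (ι α) ∧ bLen (ι α) < κ.ord) ∧
      Set.InjOn ι (Set.Iio κ.ord) ∧
      ∀ x : Ordinal → Fin 2, ∃ α < κ.ord,
        ¬ ∃ β < κ.ord, BExt (bRestrict x α) (ι β)) :
    Nonempty (@Homeomorph (GBaire κ.ord) (GCantor κ.ord)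
      (baireTopology κ.ord) (cantorTopology κ.ord)) :=
  stmt12_general κ hreg hsize hex
end
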